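/- arXiv:2208.13879 — 7 statements merged into one kernel-verified Lean document; each statement's English description precedes it below -/
import Mathlib

section
/- Let Ω be a finite nonempty set equipped with the uniform probability measure ℙ. Then there exists a finite family of functions {f_j : Ω → ℝ}_{j ∈ J} such that: (1) the f_j are pairwise orthogonal in L²(Ω, ℙ); (2) ‖f_j‖_∞ ≤ 1 for all j; (3) ‖f_j‖_{L¹(ℙ)} ≥ 1/2 for all j; and (4) |J| ≥ |Ω|/2. -/
noncomputable section HadAux

private def wal (a b : Bool) : ℝ := if a && b then -1 else 1

private lemma abs_wal (a b : Bool) : |wal a b| = 1 := by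
  cases a <;> cases b <;> simp [wal]

private def Wl {n : ℕ} (s t : Fin n → Bool) : ℝ := ∏ i, wal (s i) (t i)

private lemma abs_Wl {n : ℕ} (s t : Fin n → Bool) : |Wl s t| = 1 := by
  rw [Wl, Finset.abs_prod]
  simp [abs_wal]

private lemma Wl_orth {n : ℕ} {s s' : Fin n → Bool} (h : s ≠ s') :
    ∑ t : Fin n → Bool, Wl s t * Wl s' t = 0 := by
  have key : ∑ t : Fin n → Bool, Wl s t * Wl s' t
      = ∏ i, ∑ b : Bool, wal (s i) b * wal (s' i) b := by
    rw [Finset.prod_univ_sum]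
    rw [Fintype.piFinset_univ]
    congr 1; funext t
    simp [Wl, Finset.prod_mul_distrib]
  rw [key]
  obtain ⟨i, hi⟩ := Function.ne_iff.mp h
  apply Finset.prod_eq_zero (Finset.mem_univ i)
  revert hi
  cases hs : s i <;> cases hs' : s' i <;> simp [wal]

end HadAux

private lemma sum_extend {N M : ℕ} (h : M ≤ N) (G : Fin M → ℝ) :
    ∑ i : Fin N, (if h' : (i : ℕ) < M then G ⟨i, h'⟩ else 0) = ∑ k : Fin M, G k := by
  have hvan : ∀ i ∈ (Finset.univ : Finset (Fin N)),
      i ∉ Finset.univ.map (Fin.castLEEmb h) →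
      (if h' : (i : ℕ) < M then G ⟨i, h'⟩ else 0) = 0 := by
    intro i _ hi
    rw [dif_neg]
    intro h'
    exact hi (Finset.mem_map.mpr ⟨⟨i, h'⟩, Finset.mem_univ _, by
      simp [Fin.castLEEmb, Fin.castLE]⟩)
  rw [← Finset.sum_subset (Finset.subset_univ _) hvan, Finset.sum_map]
  apply Finset.sum_congr rfl
  intro k _
  have hk : ((Fin.castLEEmb h k : Fin N) : ℕ) < M := by
    simp [Fin.castLEEmb, Fin.castLE]
  rw [dif_pos hk]
  congr 1

/-- On a finite nonempty set with the uniform probability measure, there is a family of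
pairwise orthogonal functions, each bounded by 1 in sup norm, each with L¹-norm at least 1/2,
and with at least `|Ω|/2` members. -/
theorem hadamard_orthogonal_family (Ω : Type*) [Fintype Ω] [Nonempty Ω] :
    ∃ (M : ℕ) (f : Fin M → Ω → ℝ),
      (∀ j j', j ≠ j' → (Fintype.card Ω : ℝ)⁻¹ * ∑ ω, f j ω * f j' ω = 0) ∧
      (∀ j ω, |f j ω| ≤ 1) ∧
      (∀ j, (1 : ℝ) / 2 ≤ (Fintype.card Ω : ℝ)⁻¹ * ∑ ω, |f j ω|) ∧
      (Fintype.card Ω : ℝ) ≤ 2 * M := by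
  classical
  set N := Fintype.card Ω with hNdef
  have hN : 0 < N := Fintype.card_pos
  set n := Nat.log 2 N with hn
  set M := 2 ^ n with hM
  have h1 : M ≤ N := Nat.pow_log_le_self 2 hN.ne'
  have h2 : N < 2 * M := by
    have := Nat.lt_pow_succ_log_self (by norm_num : 1 < 2) N
    rwa [pow_succ, mul_comm] at this
  have hcard : Fintype.card (Fin n → Bool) = M := by simp [hM]
  let enc : Fin M → (Fin n → Bool) := (Fintype.equivFinOfCardEq hcard).symm
  have henc : Function.Bijective enc := (Fintype.equivFinOfCardEq hcard).symm.bijective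
  let ι : Ω ≃ Fin N := (Fintype.equivFin Ω)
  refine ⟨M, fun j ω => if h : ((ι ω : Fin N) : ℕ) < M then Wl (enc j) (enc ⟨ι ω, h⟩) else 0,
    ?_, ?_, ?_, ?_⟩
  · intro j j' hjj'
    have : ∑ ω, (fun j ω => if h : ((ι ω : Fin N) : ℕ) < M then Wl (enc j) (enc ⟨ι ω, h⟩) else 0) j ω *
        (fun j ω => if h : ((ι ω : Fin N) : ℕ) < M then Wl (enc j) (enc ⟨ι ω, h⟩) else 0) j' ω = 0 := by
      rw [← Equiv.sum_comp ι.symm]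
      have step : ∀ i : Fin N,
          (if h : ((ι (ι.symm i) : Fin N) : ℕ) < M then Wl (enc j) (enc ⟨ι (ι.symm i), h⟩) else 0) *
          (if h : ((ι (ι.symm i) : Fin N) : ℕ) < M then Wl (enc j') (enc ⟨ι (ι.symm i), h⟩) else 0)
          = (if h : (i : ℕ) < M then Wl (enc j) (enc ⟨i, h⟩) * Wl (enc j') (enc ⟨i, h⟩) else 0) := by
        intro i
        simp only [Equiv.apply_symm_apply]
        split <;> simp
      simp only [step]
      have e1 := sum_extend h1 (fun k => Wl (enc j) (enc k) * Wl (enc j') (enc k))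
      rw [e1]
      have e2 := Equiv.sum_comp (Fintype.equivFinOfCardEq hcard).symm
        (fun t => Wl (enc j) t * Wl (enc j') t)
      rw [e2]
      apply Wl_orth
      intro hcontra
      exact hjj' (henc.injective hcontra)
    rw [this, mul_zero]
  · intro j ω
    dsimp only
    split
    · rw [abs_Wl]
    · simp
  · intro j
    have hsum : ∑ ω, |if h : ((ι ω : Fin N) : ℕ) < M then Wl (enc j) (enc ⟨ι ω, h⟩) else 0| = M := by
      rw [← Equiv.sum_comp ι.symm]
      have step : ∀ i : Fin N,
          |if h : ((ι (ι.symm i) : Fin N) : ℕ) < M then Wl (enc j) (enc ⟨ι (ι.symm i), h⟩) else 0|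
          = (if h : (i : ℕ) < M then (1:ℝ) else 0) := by
        intro i
        simp only [Equiv.apply_symm_apply]
        split
        · rw [abs_Wl]
        · simp
      simp only [step]
      have e1 := sum_extend h1 (fun _ => (1:ℝ))
      rw [e1]
      simp
    rw [hsum]
    have hNpos : (0:ℝ) < N := by exact_mod_cast hN
    have h2' : (N:ℝ) ≤ 2 * M := by exact_mod_cast h2.le
    rw [inv_mul_eq_div, le_div_iff₀ hNpos]
    linarith
  · exact_mod_cast h2.le
end

section
/- Let G be a finite directed graph, μ a probability measure on V(G), ν a probability measure on E(G), d : E(G) → (0,∞), and δ ∈ [1,∞) with Hölder conjugate δ′. Suppose that for every A ⊆ V(G), min{μ(A), μ(Aᶜ)}^{(δ−1)/δ} ≤ C · Per(A), where Per(A) = ∑_{e ∈ ∂A} ν(e)/d(e). Then for every f : V(G) → ℝ, ‖f − 𝔼_μ f‖_{L^{δ′}(μ)} ≤ 2C · ‖f‖_{W^{1,1}(ν,d)}, where ‖f‖_{W^{1,1}(ν,d)} = ∑_{e ∈ E(G)} ν(e)|f(e⁺) − f(e⁻)|/d(e) and 𝔼_μ f = ∑_{x} f(x) μ(x). -/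
open Finset

private lemma abs_decomp (u : ℝ) : |u| = max u 0 + max (-u) 0 := by
  rcases le_total 0 u with h | h
  · rw [abs_of_nonneg h, max_eq_left h, max_eq_right (by linarith)]; ring
  · rw [abs_of_nonpos h, max_eq_right h, max_eq_left (by linarith)]; ring

private lemma posneg_decomp (u : ℝ) : max u 0 - max (-u) 0 = u := by
  rcases le_total 0 u with h | h
  · rw [max_eq_left h, max_eq_right (by linarith)]; ring
  · rw [max_eq_right h, max_eq_left (by linarith)]; ring

private lemma posneg_abs (u v : ℝ) :
    |max u 0 - max v 0| + |max (-u) 0 - max (-v) 0| = |u - v| := by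
  rcases le_total 0 u with hu | hu <;> rcases le_total 0 v with hv | hv
  · rw [max_eq_left hu, max_eq_left hv, max_eq_right (by linarith), max_eq_right (by linarith)]
    simp
  · rw [max_eq_left hu, max_eq_right hv, max_eq_right (by linarith), max_eq_left (by linarith)]
    rw [abs_of_nonneg (by linarith), abs_of_nonpos (by linarith),
      abs_of_nonneg (by linarith)]; ring
  · rw [max_eq_right hu, max_eq_left hv, max_eq_left (by linarith), max_eq_right (by linarith)]
    rw [abs_of_nonpos (by linarith), abs_of_nonneg (by linarith),
      abs_of_nonpos (by linarith)]; ring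
  · rw [max_eq_right hu, max_eq_right hv, max_eq_left (by linarith), max_eq_left (by linarith)]
    rw [show -u - -v = -(u - v) by ring, abs_neg]
    simp

private lemma coarea_edge {s M a b : ℝ} (hsM : s < M)
    (ha : a ≤ s ∨ a = M) (hb : b ≤ s ∨ b = M) :
    |min b s - min a s| + (M - s) * (if (s < a ∧ ¬ s < b) ∨ (¬ s < a ∧ s < b) then 1 else 0)
      = |b - a| := by
  by_cases hA : s < a <;> by_cases hB : s < b
  · have ha' : a = M := ha.resolve_left (by linarith)
    have hb' : b = M := hb.resolve_left (by linarith)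
    simp [hA, hB, ha', hb', min_eq_right (le_of_lt hsM)]
  · have ha' : a = M := ha.resolve_left (by linarith)
    have hb' : b ≤ s := hb.resolve_right (by rintro rfl; exact hB hsM)
    rw [min_eq_left hb', min_eq_right (le_of_lt hA), if_pos (Or.inl ⟨hA, hB⟩), mul_one,
      abs_of_nonpos (by linarith), abs_of_nonpos (by linarith [ha'])]
    rw [ha']; ring
  · have hb' : b = M := hb.resolve_left (by linarith)
    have ha' : a ≤ s := ha.resolve_right (by rintro rfl; exact hA hsM)
    rw [min_eq_left ha', min_eq_right (le_of_lt hB), if_pos (Or.inr ⟨hA, hB⟩), mul_one,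
      abs_of_nonneg (by linarith), abs_of_nonneg (by linarith [hb'])]
    rw [hb']; ring
  · have ha' : a ≤ s := ha.resolve_right (by rintro rfl; exact hA hsM)
    have hb' : b ≤ s := hb.resolve_right (by rintro rfl; exact hB hsM)
    rw [min_eq_left ha', min_eq_left hb', if_neg (by tauto), mul_zero, add_zero]

private lemma wLp_add_le {V : Type*} [Fintype V] (w : V → ℝ) (hw : ∀ x, 0 ≤ w x)
    {p : ℝ} (hp : 1 ≤ p) (a b : V → ℝ) :
    (∑ x, w x * |a x + b x| ^ p) ^ (1/p) ≤
      (∑ x, w x * |a x| ^ p) ^ (1/p) + (∑ x, w x * |b x| ^ p) ^ (1/p) := by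
  have hp0 : p ≠ 0 := by positivity
  have key : ∀ u : V → ℝ, ∀ x : V, |w x ^ (1/p) * u x| ^ p = w x * |u x| ^ p := by
    intro u x
    rw [abs_mul, abs_of_nonneg (Real.rpow_nonneg (hw x) _),
      Real.mul_rpow (Real.rpow_nonneg (hw x) _) (abs_nonneg _),
      ← Real.rpow_mul (hw x), one_div_mul_cancel hp0, Real.rpow_one]
  have e1 : ∑ x, w x * |a x + b x| ^ p
      = ∑ x, |(fun x => w x ^ (1/p) * a x) x + (fun x => w x ^ (1/p) * b x) x| ^ p := by
    refine Finset.sum_congr rfl fun x _ => ?_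
    simp only [← mul_add]
    rw [key (fun x => a x + b x) x]
  have e2 : ∑ x, w x * |a x| ^ p = ∑ x, |(fun x => w x ^ (1/p) * a x) x| ^ p :=
    Finset.sum_congr rfl fun x _ => (key a x).symm
  have e3 : ∑ x, w x * |b x| ^ p = ∑ x, |(fun x => w x ^ (1/p) * b x) x| ^ p :=
    Finset.sum_congr rfl fun x _ => (key b x).symm
  rw [e1, e2, e3]
  exact Real.Lp_add_le Finset.univ _ _ hp

private lemma jensen_L1 {V : Type*} [Fintype V] (w : V → ℝ) (hw : ∀ x, 0 ≤ w x)
    (hw1 : ∑ x, w x = 1) {p : ℝ} (hp : 1 ≤ p) (h : V → ℝ) :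
    ∑ x, w x * |h x| ≤ (∑ x, w x * |h x| ^ p) ^ (1/p) := by
  have := Real.inner_le_weight_mul_Lp_of_nonneg Finset.univ hp w (fun x => |h x|) hw
    (fun x => abs_nonneg _)
  rw [hw1, Real.one_rpow, one_mul] at this
  simpa [one_div] using this

private lemma key_iso {V E : Type*} [Fintype V] [Fintype E] [DecidableEq V]
    (src tgt : E → V)
    (μ : V → ℝ) (hμ0 : ∀ x, 0 ≤ μ x) (hμ1 : ∑ x, μ x = 1)
    (ν : E → ℝ) (d : E → ℝ)
    (δ δ' C : ℝ) (hδ'1 : 1 < δ') (hexp : (δ - 1) / δ = 1 / δ')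
    (hiso : ∀ A : Finset V,
      (min (∑ x ∈ A, μ x) (∑ x ∈ Aᶜ, μ x)) ^ ((δ - 1) / δ) ≤
        C * ∑ e, (if (src e ∈ A ∧ tgt e ∉ A) ∨ (src e ∉ A ∧ tgt e ∈ A)
          then ν e / d e else 0)) :
    ∀ n : ℕ, ∀ g : V → ℝ, (Finset.image g Finset.univ \ {0}).card ≤ n →
      (∀ x, 0 ≤ g x) →
      (∑ x ∈ Finset.univ.filter (fun x => 0 < g x), μ x) ≤ 1/2 →
      (∑ x, μ x * |g x| ^ δ') ^ (1/δ') ≤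
        C * ∑ e, ν e * |g (tgt e) - g (src e)| / d e := by
  have hδ'0 : δ' ≠ 0 := by linarith
  have h1δ'0 : (1:ℝ)/δ' ≠ 0 := one_div_ne_zero hδ'0
  intro n
  induction n with
  | zero =>
    intro g hcard hg0 _
    have hz : Finset.image g Finset.univ \ {0} = ∅ := Finset.card_eq_zero.mp (Nat.le_zero.mp hcard)
    have hg : ∀ x, g x = 0 := by
      intro x
      by_contra hx
      have : g x ∈ Finset.image g Finset.univ \ {0} := by
        simp only [Finset.mem_sdiff, Finset.mem_image, Finset.mem_singleton]
        exact ⟨⟨x, Finset.mem_univ x, rfl⟩, hx⟩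
      rw [hz] at this; exact absurd this (Finset.notMem_empty _)
    simp [hg, Real.zero_rpow hδ'0, Real.zero_rpow h1δ'0, Real.zero_rpow (inv_ne_zero hδ'0)]
  | succ n ih =>
    intro g hcard hg0 hsmall
    by_cases hzero : ∀ x, g x = 0
    · simp [hzero, Real.zero_rpow hδ'0, Real.zero_rpow h1δ'0, Real.zero_rpow (inv_ne_zero hδ'0)]
    push_neg at hzero
    obtain ⟨x₀, hx₀⟩ := hzero
    set T : Finset ℝ := Finset.image g Finset.univ with hT
    have hTne : (T \ {0}).Nonempty := by
      refine ⟨g x₀, ?_⟩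
      simp only [hT, Finset.mem_sdiff, Finset.mem_image, Finset.mem_singleton]
      exact ⟨⟨x₀, Finset.mem_univ x₀, rfl⟩, hx₀⟩
    set M : ℝ := (T \ {0}).max' hTne with hMdef
    have hM_mem := (T \ {0}).max'_mem hTne
    rw [Finset.mem_sdiff, Finset.mem_singleton] at hM_mem
    obtain ⟨hMT, hM0⟩ := hM_mem
    obtain ⟨xM, _, hxM⟩ := Finset.mem_image.mp hMT
    have hMpos : 0 < M := lt_of_le_of_ne (by rw [hMdef, ← hxM]; exact hg0 xM) (Ne.symm hM0)
    have hMtop : ∀ x, g x ≤ M := by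
      intro x
      by_cases h : g x = 0
      · rw [h]; exact le_of_lt hMpos
      · exact Finset.le_max' _ _ (by
          rw [Finset.mem_sdiff, Finset.mem_singleton]
          exact ⟨Finset.mem_image.mpr ⟨x, Finset.mem_univ x, rfl⟩, h⟩)
    have h0T : (0:ℝ) ∈ T := by
      by_contra h0
      have hever : ∀ x, 0 < g x := by
        intro x
        refine lt_of_le_of_ne (hg0 x) fun h => ?_
        exact h0 (h ▸ Finset.mem_image.mpr ⟨x, Finset.mem_univ x, rfl⟩)
      have : Finset.univ.filter (fun x => 0 < g x) = Finset.univ :=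
        Finset.filter_true_of_mem fun x _ => hever x
      rw [this, hμ1] at hsmall; linarith
    have h0erase : (0:ℝ) ∈ T.erase M := Finset.mem_erase.mpr ⟨Ne.symm hM0, h0T⟩
    set s : ℝ := (T.erase M).max' ⟨0, h0erase⟩ with hsdef
    have hs_mem := (T.erase M).max'_mem ⟨0, h0erase⟩
    rw [Finset.mem_erase] at hs_mem
    obtain ⟨hsM0, hsT⟩ := hs_mem
    obtain ⟨xs, _, hxs⟩ := Finset.mem_image.mp hsT
    have hs0 : 0 ≤ s := Finset.le_max' _ 0 h0erase
    have hsM : s < M := lt_of_le_of_ne (by rw [hsdef, ← hxs]; exact hMtop xs) hsM0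
    have hdich : ∀ x, g x ≤ s ∨ g x = M := by
      intro x
      by_cases h : g x = M
      · exact Or.inr h
      · exact Or.inl (Finset.le_max' _ _ (Finset.mem_erase.mpr
          ⟨h, Finset.mem_image.mpr ⟨x, Finset.mem_univ x, rfl⟩⟩))
    set A : Finset V := Finset.univ.filter (fun x => s < g x) with hA
    have hmemA : ∀ x, x ∈ A ↔ s < g x := by
      intro x; simp [hA]
    set h : V → ℝ := fun x => min (g x) s with hh
    -- decomposition
    have hdecomp : ∀ x, g x = h x + (M - s) * (if x ∈ A then 1 else 0) := by
      intro x
      by_cases hx : x ∈ A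
      · have hgx : g x = M := (hdich x).resolve_left (by
          rw [hmemA] at hx; exact not_le.mpr hx)
        simp [hh, hx, hgx, min_eq_right (le_of_lt hsM)]
      · have hgx : g x ≤ s := by
          rw [hmemA, not_lt] at hx; exact hx
        simp [hh, hx, min_eq_left hgx]
    -- card decrease
    have hsubset : Finset.image h Finset.univ \ {0} ⊆ (T \ {0}).erase M := by
      intro y hy
      rw [Finset.mem_sdiff, Finset.mem_singleton] at hy
      obtain ⟨hyim, hy0⟩ := hy
      obtain ⟨x, _, hx⟩ := Finset.mem_image.mp hyim
      rcases hdich x with hxs | hxM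
      · have : y = g x := by rw [← hx]; exact min_eq_left hxs
        refine Finset.mem_erase.mpr ⟨?_, Finset.mem_sdiff.mpr
          ⟨this ▸ Finset.mem_image.mpr ⟨x, Finset.mem_univ x, rfl⟩, Finset.mem_singleton.not.mpr hy0⟩⟩
        rw [this]; exact ne_of_lt (lt_of_le_of_lt hxs hsM)
      · have : y = s := by rw [← hx]; show min (g x) s = s; rw [hxM]; exact min_eq_right (le_of_lt hsM)
        refine Finset.mem_erase.mpr ⟨this ▸ hsM0, Finset.mem_sdiff.mpr
          ⟨this ▸ hsT, Finset.mem_singleton.not.mpr hy0⟩⟩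
    have hMmem' : M ∈ T \ {0} := Finset.mem_sdiff.mpr ⟨hMT, Finset.mem_singleton.not.mpr hM0⟩
    have hcard' : (Finset.image h Finset.univ \ {0}).card ≤ n := by
      have h1 := Finset.card_le_card hsubset
      rw [Finset.card_erase_of_mem hMmem'] at h1
      omega
    -- smallness for h
    have hsubfil : Finset.univ.filter (fun x => 0 < h x) ⊆ Finset.univ.filter (fun x => 0 < g x) := by
      intro x hx
      rw [Finset.mem_filter] at hx ⊢
      exact ⟨hx.1, lt_of_lt_of_le hx.2 (min_le_left _ _)⟩
    have hsmall' : (∑ x ∈ Finset.univ.filter (fun x => 0 < h x), μ x) ≤ 1/2 :=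
      le_trans (Finset.sum_le_sum_of_subset_of_nonneg hsubfil fun x _ _ => hμ0 x) hsmall
    have hih := ih h hcard' (fun x => le_min (hg0 x) hs0) hsmall'
    -- Minkowski
    have hmink := wLp_add_le μ hμ0 (le_of_lt hδ'1) h
      (fun x => (M - s) * (if x ∈ A then 1 else 0))
    have hLHS : ∑ x, μ x * |g x| ^ δ'
        = ∑ x, μ x * |h x + (fun x => (M - s) * (if x ∈ A then 1 else 0)) x| ^ δ' := by
      refine Finset.sum_congr rfl fun x _ => ?_
      rw [← hdecomp x]
    -- indicator norm
    have hNind : (∑ x, μ x * |(M - s) * (if x ∈ A then 1 else 0)| ^ δ') ^ (1/δ')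
        = (M - s) * (∑ x ∈ A, μ x) ^ (1/δ') := by
      have e : ∀ x : V, μ x * |(M - s) * (if x ∈ A then 1 else 0)| ^ δ'
          = (M - s) ^ δ' * (if x ∈ A then μ x else 0) := by
        intro x
        by_cases hx : x ∈ A
        · rw [if_pos hx, if_pos hx, mul_one, abs_of_nonneg (by linarith)]; ring
        · rw [if_neg hx, if_neg hx, mul_zero, abs_zero, Real.zero_rpow hδ'0]; ring
      rw [Finset.sum_congr rfl fun x _ => e x, ← Finset.mul_sum,
        Finset.sum_ite_mem, Finset.univ_inter,
        Real.mul_rpow (Real.rpow_nonneg (by linarith) _)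
          (Finset.sum_nonneg fun x _ => hμ0 x),
        ← Real.rpow_mul (by linarith : (0:ℝ) ≤ M - s), mul_one_div_cancel hδ'0, Real.rpow_one]
    -- isoperimetry
    have hAsub : A ⊆ Finset.univ.filter (fun x => 0 < g x) := by
      intro x hx
      rw [hmemA] at hx
      rw [Finset.mem_filter]
      exact ⟨Finset.mem_univ x, lt_of_le_of_lt hs0 hx⟩
    have hμA : ∑ x ∈ A, μ x ≤ 1/2 :=
      le_trans (Finset.sum_le_sum_of_subset_of_nonneg hAsub fun x _ _ => hμ0 x) hsmall
    have hcompl : ∑ x ∈ Aᶜ, μ x = 1 - ∑ x ∈ A, μ x := by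
      have := Finset.sum_add_sum_compl A μ
      rw [hμ1] at this; linarith
    have hiso' : (∑ x ∈ A, μ x) ^ ((1:ℝ)/δ') ≤
        C * ∑ e, (if (src e ∈ A ∧ tgt e ∉ A) ∨ (src e ∉ A ∧ tgt e ∈ A)
          then ν e / d e else 0) := by
      have h1 := hiso A
      rw [hexp, min_eq_left (by rw [hcompl]; linarith)] at h1
      exact h1
    -- coarea
    have hW : ∑ e, ν e * |g (tgt e) - g (src e)| / d e
        = (∑ e, ν e * |h (tgt e) - h (src e)| / d e)
          + (M - s) * ∑ e, (if (src e ∈ A ∧ tgt e ∉ A) ∨ (src e ∉ A ∧ tgt e ∈ A)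
              then ν e / d e else 0) := by
      rw [Finset.mul_sum, ← Finset.sum_add_distrib]
      refine Finset.sum_congr rfl fun e _ => ?_
      have hc := coarea_edge hsM (hdich (src e)) (hdich (tgt e))
      have hcond : ((src e ∈ A ∧ tgt e ∉ A) ∨ (src e ∉ A ∧ tgt e ∈ A))
          ↔ ((s < g (src e) ∧ ¬ s < g (tgt e)) ∨ (¬ s < g (src e) ∧ s < g (tgt e))) := by
        simp [hmemA]
      by_cases hcnd : (s < g (src e) ∧ ¬ s < g (tgt e)) ∨ (¬ s < g (src e) ∧ s < g (tgt e))
      · rw [if_pos hcnd, mul_one] at hc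
        rw [if_pos (hcond.mpr hcnd), ← hc]
        show ν e * (|min (g (tgt e)) s - min (g (src e)) s| + (M - s)) / d e
          = ν e * |min (g (tgt e)) s - min (g (src e)) s| / d e + (M - s) * (ν e / d e)
        ring
      · rw [if_neg hcnd, mul_zero, add_zero] at hc
        rw [if_neg ((not_congr hcond).mpr hcnd), mul_zero, add_zero, ← hc]
    -- assemble
    rw [hLHS, hW]
    calc (∑ x, μ x * |h x + (fun x => (M - s) * if x ∈ A then 1 else 0) x| ^ δ') ^ (1/δ')
        ≤ (∑ x, μ x * |h x| ^ δ') ^ (1/δ')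
          + (∑ x, μ x * |(M - s) * (if x ∈ A then 1 else 0)| ^ δ') ^ (1/δ') := hmink
      _ ≤ C * (∑ e, ν e * |h (tgt e) - h (src e)| / d e)
          + (M - s) * (C * ∑ e, (if (src e ∈ A ∧ tgt e ∉ A) ∨ (src e ∉ A ∧ tgt e ∈ A)
              then ν e / d e else 0)) := by
          rw [hNind]
          exact add_le_add hih (mul_le_mul_of_nonneg_left hiso' (by linarith))
      _ = C * ((∑ e, ν e * |h (tgt e) - h (src e)| / d e)
          + (M - s) * ∑ e, (if (src e ∈ A ∧ tgt e ∉ A) ∨ (src e ∉ A ∧ tgt e ∈ A)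
              then ν e / d e else 0)) := by ring

/-- Sobolev inequality from an isoperimetric inequality on a measured weighted finite graph:
if `min{μ(A), μ(Aᶜ)}^{(δ−1)/δ} ≤ C·Per(A)` for all vertex sets `A`, then for every
`f : V → ℝ`, `‖f − 𝔼_μ f‖_{L^{δ′}(μ)} ≤ 2C · ‖f‖_{W^{1,1}(ν,d)}`, where `δ′` is the Hölder
conjugate of `δ`. -/
theorem sobolev_from_isoperimetric {V E : Type*} [Fintype V] [Fintype E] [DecidableEq V]
    (src tgt : E → V)
    (μ : V → ℝ) (hμ0 : ∀ x, 0 ≤ μ x) (hμ1 : ∑ x, μ x = 1)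
    (ν : E → ℝ) (hν0 : ∀ e, 0 ≤ ν e) (hν1 : ∑ e, ν e = 1)
    (d : E → ℝ) (hd : ∀ e, 0 < d e)
    (δ δ' C : ℝ) (hδ : 1 ≤ δ) (hconj : 1 / δ + 1 / δ' = 1)
    (hiso : ∀ A : Finset V,
      (min (∑ x ∈ A, μ x) (∑ x ∈ Aᶜ, μ x)) ^ ((δ - 1) / δ) ≤
        C * ∑ e, (if (src e ∈ A ∧ tgt e ∉ A) ∨ (src e ∉ A ∧ tgt e ∈ A)
          then ν e / d e else 0))
    (f : V → ℝ) :
    (∑ x, μ x * |f x - ∑ y, f y * μ y| ^ δ') ^ (1 / δ') ≤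
      2 * C * ∑ e, ν e * |f (tgt e) - f (src e)| / d e := by
  have hVne : Nonempty V := by
    by_contra hv
    rw [not_nonempty_iff] at hv
    rw [Finset.univ_eq_empty, Finset.sum_empty] at hμ1
    norm_num at hμ1
  rcases eq_or_lt_of_le hδ with hδ1 | hδ1
  · exfalso
    have h0 := hiso ∅
    have hexp0 : (δ - 1) / δ = 0 := by rw [← hδ1]; norm_num
    rw [hexp0, Real.rpow_zero] at h0
    simp only [Finset.notMem_empty, false_and, and_false, or_self, if_false,
      Finset.sum_const_zero, mul_zero] at h0
    linarith
  have hδpos : 0 < δ := by linarith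
  have hδ0 : δ ≠ 0 := ne_of_gt hδpos
  have h1d : 1 / δ' = 1 - 1 / δ := by linarith
  have h1d_pos : 0 < 1 / δ' := by
    rw [h1d]
    have : 1 / δ < 1 := by rw [div_lt_one hδpos]; exact hδ1
    linarith
  have hδ'pos : 0 < δ' := one_div_pos.mp h1d_pos
  have hδ'1 : 1 < δ' := by
    have h2 : 1 / δ' < 1 := by
      rw [h1d]
      have : 0 < 1 / δ := by positivity
      linarith
    rw [div_lt_one hδ'pos] at h2
    exact h2
  have hδ'0 : δ' ≠ 0 := ne_of_gt hδ'pos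
  have hexp : (δ - 1) / δ = 1 / δ' := by rw [sub_div, div_self hδ0, h1d]
  -- median
  obtain ⟨xmax, -, hxmax⟩ := Finset.exists_max_image Finset.univ f
    ⟨Classical.arbitrary V, Finset.mem_univ _⟩
  set S := Finset.univ.filter
    (fun x => 1/2 ≤ ∑ y ∈ Finset.univ.filter (fun y => f y ≤ f x), μ y) with hS
  have hSne : S.Nonempty := by
    refine ⟨xmax, ?_⟩
    rw [hS, Finset.mem_filter]
    refine ⟨Finset.mem_univ _, ?_⟩
    have : Finset.univ.filter (fun y => f y ≤ f xmax) = Finset.univ :=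
      Finset.filter_true_of_mem fun y _ => hxmax y (Finset.mem_univ y)
    rw [this, hμ1]; norm_num
  obtain ⟨x₀, hx₀S, hx₀min⟩ := Finset.exists_min_image S f hSne
  set m := f x₀ with hm
  have hm1 : 1/2 ≤ ∑ y ∈ Finset.univ.filter (fun y => f y ≤ m), μ y := by
    rw [hS, Finset.mem_filter] at hx₀S
    exact hx₀S.2
  have hup : ∑ y ∈ Finset.univ.filter (fun y => m < f y), μ y ≤ 1/2 := by
    have hsplit := Finset.sum_filter_add_sum_filter_not Finset.univ (fun y => f y ≤ m) μ
    rw [hμ1] at hsplit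
    have heq : Finset.univ.filter (fun y => ¬ f y ≤ m)
        = Finset.univ.filter (fun y => m < f y) := by
      apply Finset.filter_congr; intro y _; simp [not_le]
    rw [heq] at hsplit
    linarith
  have hdown : ∑ y ∈ Finset.univ.filter (fun y => f y < m), μ y ≤ 1/2 := by
    by_contra hcon
    push_neg at hcon
    set B := Finset.univ.filter (fun y => f y < m) with hB
    have hBne : B.Nonempty := by
      by_contra hBe
      rw [Finset.not_nonempty_iff_eq_empty] at hBe
      rw [hBe, Finset.sum_empty] at hcon
      linarith
    obtain ⟨x₁, hx₁B, hx₁max⟩ := Finset.exists_max_image B f hBne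
    have hx₁m : f x₁ < m := by
      rw [hB, Finset.mem_filter] at hx₁B
      exact hx₁B.2
    have hsub : B ⊆ Finset.univ.filter (fun y => f y ≤ f x₁) := by
      intro y hy
      rw [Finset.mem_filter]
      exact ⟨Finset.mem_univ y, hx₁max y hy⟩
    have hge : 1/2 ≤ ∑ y ∈ Finset.univ.filter (fun y => f y ≤ f x₁), μ y :=
      le_trans (le_of_lt hcon)
        (Finset.sum_le_sum_of_subset_of_nonneg hsub fun y _ _ => hμ0 y)
    have hx₁S : x₁ ∈ S := by
      rw [hS, Finset.mem_filter]
      exact ⟨Finset.mem_univ _, hge⟩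
    have := hx₀min x₁ hx₁S
    linarith
  -- positive and negative parts
  set gp : V → ℝ := fun x => max (f x - m) 0 with hgp
  set gm : V → ℝ := fun x => max (-(f x - m)) 0 with hgm
  have hgp0 : ∀ x, 0 ≤ gp x := fun x => le_max_right _ _
  have hgm0 : ∀ x, 0 ≤ gm x := fun x => le_max_right _ _
  have hsmallp : ∑ x ∈ Finset.univ.filter (fun x => 0 < gp x), μ x ≤ 1/2 := by
    have heq : Finset.univ.filter (fun x => 0 < gp x)
        = Finset.univ.filter (fun y => m < f y) := by
      apply Finset.filter_congr; intro x _
      rw [hgp]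
      simp [lt_max_iff, sub_pos]
    rw [heq]; exact hup
  have hsmallm : ∑ x ∈ Finset.univ.filter (fun x => 0 < gm x), μ x ≤ 1/2 := by
    have heq : Finset.univ.filter (fun x => 0 < gm x)
        = Finset.univ.filter (fun y => f y < m) := by
      apply Finset.filter_congr; intro x _
      rw [hgm]
      simp [lt_max_iff, sub_neg]
    rw [heq]; exact hdown
  have keyp := key_iso src tgt μ hμ0 hμ1 ν d δ δ' C hδ'1 hexp hiso
    (Finset.image gp Finset.univ \ {0}).card gp le_rfl hgp0 hsmallp
  have keym := key_iso src tgt μ hμ0 hμ1 ν d δ δ' C hδ'1 hexp hiso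
    (Finset.image gm Finset.univ \ {0}).card gm le_rfl hgm0 hsmallm
  set c := ∑ y, f y * μ y with hc
  have hdecF : ∀ x, f x - c = gp x + (-(gm x) + (m - c)) := by
    intro x
    have h1 : gp x - gm x = f x - m := posneg_decomp (f x - m)
    linarith
  have hNconst : (∑ _x : V, μ _x * |m - c| ^ δ') ^ (1/δ') = |m - c| := by
    rw [← Finset.sum_mul, hμ1, one_mul, ← Real.rpow_mul (abs_nonneg _),
      mul_one_div_cancel hδ'0, Real.rpow_one]
  have hmc : |m - c| ≤ (∑ x, μ x * |gp x| ^ δ') ^ (1/δ')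
      + (∑ x, μ x * |gm x| ^ δ') ^ (1/δ') := by
    have h1 : m - c = ∑ y, (m - f y) * μ y := by
      calc m - c = m * (∑ y, μ y) - ∑ y, f y * μ y := by rw [hμ1, mul_one, hc]
        _ = (∑ y, m * μ y) - ∑ y, f y * μ y := by rw [Finset.mul_sum]
        _ = ∑ y, (m - f y) * μ y := by
            rw [← Finset.sum_sub_distrib]
            exact Finset.sum_congr rfl fun y _ => by ring
    have h2 : |m - c| ≤ ∑ y, μ y * |f y - m| := by
      rw [h1]
      refine le_trans (Finset.abs_sum_le_sum_abs _ _) ?_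
      refine Finset.sum_le_sum fun y _ => ?_
      rw [abs_mul, abs_of_nonneg (hμ0 y), abs_sub_comm, mul_comm]
    have h3 : ∑ y, μ y * |f y - m| = (∑ y, μ y * |gp y|) + (∑ y, μ y * |gm y|) := by
      rw [← Finset.sum_add_distrib]
      refine Finset.sum_congr rfl fun y _ => ?_
      rw [abs_of_nonneg (hgp0 y), abs_of_nonneg (hgm0 y), ← mul_add]
      congr 1
      exact abs_decomp (f y - m)
    calc |m - c| ≤ ∑ y, μ y * |f y - m| := h2
      _ = _ := h3
      _ ≤ _ := add_le_add (jensen_L1 μ hμ0 hμ1 (le_of_lt hδ'1) gp)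
          (jensen_L1 μ hμ0 hμ1 (le_of_lt hδ'1) gm)
  have hWsum : (∑ e, ν e * |gp (tgt e) - gp (src e)| / d e)
      + (∑ e, ν e * |gm (tgt e) - gm (src e)| / d e)
      = ∑ e, ν e * |f (tgt e) - f (src e)| / d e := by
    rw [← Finset.sum_add_distrib]
    refine Finset.sum_congr rfl fun e _ => ?_
    have h6 : |gp (tgt e) - gp (src e)| + |gm (tgt e) - gm (src e)|
        = |f (tgt e) - f (src e)| := by
      have h7 : (f (tgt e) - m) - (f (src e) - m) = f (tgt e) - f (src e) := by ring
      rw [← h7]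
      exact posneg_abs (f (tgt e) - m) (f (src e) - m)
    rw [← h6]
    ring
  calc (∑ x, μ x * |f x - c| ^ δ') ^ (1/δ')
      = (∑ x, μ x * |gp x + (-(gm x) + (m - c))| ^ δ') ^ (1/δ') := by
        congr 1
        exact Finset.sum_congr rfl fun x _ => by rw [hdecF x]
    _ ≤ (∑ x, μ x * |gp x| ^ δ') ^ (1/δ')
        + (∑ x, μ x * |(-(gm x) + (m - c))| ^ δ') ^ (1/δ') :=
        wLp_add_le μ hμ0 (le_of_lt hδ'1) gp (fun x => -(gm x) + (m - c))
    _ ≤ (∑ x, μ x * |gp x| ^ δ') ^ (1/δ')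
        + ((∑ x, μ x * |(-(gm x))| ^ δ') ^ (1/δ')
          + (∑ _x : V, μ _x * |m - c| ^ δ') ^ (1/δ')) :=
        add_le_add le_rfl
          (wLp_add_le μ hμ0 (le_of_lt hδ'1) (fun x => -(gm x)) (fun _ => m - c))
    _ = (∑ x, μ x * |gp x| ^ δ') ^ (1/δ')
        + ((∑ x, μ x * |gm x| ^ δ') ^ (1/δ') + |m - c|) := by
        have hneg : ∑ x, μ x * |(-(gm x))| ^ δ' = ∑ x, μ x * |gm x| ^ δ' :=
          Finset.sum_congr rfl fun x _ => by rw [abs_neg]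
        rw [hneg, hNconst]
    _ ≤ (∑ x, μ x * |gp x| ^ δ') ^ (1/δ')
        + ((∑ x, μ x * |gm x| ^ δ') ^ (1/δ')
          + ((∑ x, μ x * |gp x| ^ δ') ^ (1/δ') + (∑ x, μ x * |gm x| ^ δ') ^ (1/δ'))) :=
        add_le_add le_rfl (add_le_add le_rfl hmc)
    _ ≤ 2 * C * ∑ e, ν e * |f (tgt e) - f (src e)| / d e := by
        have h9 : C * (∑ e, ν e * |gp (tgt e) - gp (src e)| / d e)
            + C * (∑ e, ν e * |gm (tgt e) - gm (src e)| / d e)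
            = C * ∑ e, ν e * |f (tgt e) - f (src e)| / d e := by
          rw [← hWsum]; ring
        linarith [keyp, keym]
end

section
/- Let G be a finite directed graph, ν a probability measure on E(G), d : E(G) → (0,∞), δ ∈ [1,∞), δ′ its Hölder conjugate, and C > 0 such that for every A ⊆ V(G), min{μ(A), μ(Aᶜ)}^{1/δ′} ≤ C · Per(A), where μ = μ_{1/2}(ν) is the vertex measure μ(x) = ∑_{e : e⁺ = x} ν(e)/2 + ∑_{e : e⁻ = x} ν(e)/2. Then for every g : V(G) → ℝ with median 0 (i.e., μ(g > 0) ≤ 1/2 and μ(g < 0) ≤ 1/2), ‖g‖_{L^{δ′}(μ)} ≤ C · ‖g‖_{W^{1,1}(ν,d)}. -/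
open Finset

lemma rpow_add_le' {x y p : ℝ} (hx : 0 ≤ x) (hy : 0 ≤ y) (hp : 1 ≤ p) :
    (x + y) ^ (1/p) ≤ x ^ (1/p) + y ^ (1/p) := by
  have hp0 : 0 < p := lt_of_lt_of_le zero_lt_one hp
  have hq0 : (0:ℝ) ≤ 1/p := by positivity
  have hq1 : 1/p ≤ 1 := by rw [div_le_one hp0]; exact hp
  have h := NNReal.rpow_add_le_add_rpow (p := 1/p) x.toNNReal y.toNNReal hq0 hq1
  have h2 := NNReal.coe_le_coe.2 h
  rw [NNReal.coe_add, NNReal.coe_rpow, NNReal.coe_rpow, NNReal.coe_rpow,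
    NNReal.coe_add, Real.coe_toNNReal _ hx, Real.coe_toNNReal _ hy] at h2
  exact h2

lemma abs_split (a b : ℝ) :
    |a - b| = |max a 0 - max b 0| + |max (-a) 0 - max (-b) 0| := by
  rcases le_total a 0 with ha | ha <;> rcases le_total b 0 with hb | hb
  · rw [max_eq_right ha, max_eq_right hb, max_eq_left (neg_nonneg.2 ha),
      max_eq_left (neg_nonneg.2 hb)]
    rw [show -a - -b = -(a-b) by ring, abs_neg]
    simp
  · rw [max_eq_right ha, max_eq_left hb, max_eq_left (neg_nonneg.2 ha),
      max_eq_right (neg_nonpos.2 hb)]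
    rw [abs_of_nonpos (by linarith), abs_of_nonpos (by linarith), abs_of_nonneg (by linarith)]
    ring
  · rw [max_eq_left ha, max_eq_right hb, max_eq_right (neg_nonpos.2 ha),
      max_eq_left (neg_nonneg.2 hb)]
    rw [abs_of_nonneg (by linarith), abs_of_nonneg (by linarith), abs_of_nonpos (by linarith)]
    ring
  · rw [max_eq_left ha, max_eq_left hb, max_eq_right (neg_nonpos.2 ha),
      max_eq_right (neg_nonpos.2 hb)]
    simp

open Finset

lemma sobolev_nonneg {V E : Type*} [Fintype V] [Fintype E] [DecidableEq V]
    (src tgt : E → V)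
    (ν : E → ℝ) (hν0 : ∀ e, 0 ≤ ν e) (d : E → ℝ) (hd : ∀ e, 0 < d e)
    (p C : ℝ) (hp : 1 ≤ p) (hC : 0 ≤ C)
    (μ : V → ℝ) (hμ0 : ∀ x, 0 ≤ μ x) (hμ1 : ∑ x, μ x = 1)
    (hiso : ∀ A : Finset V, (∑ x ∈ A, μ x) ≤ 1/2 →
      (∑ x ∈ A, μ x) ^ (1/p) ≤
        C * ∑ e, (if (src e ∈ A ∧ tgt e ∉ A) ∨ (src e ∉ A ∧ tgt e ∈ A)
          then ν e / d e else 0))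
    (f : V → ℝ) (hf0 : ∀ x, 0 ≤ f x)
    (hsupp : ∑ x ∈ Finset.univ.filter (fun x => 0 < f x), μ x ≤ 1/2) :
    (∑ x, μ x * f x ^ p) ^ (1/p) ≤ C * ∑ e, ν e * |f (tgt e) - f (src e)| / d e := by
  classical
  have hp0 : 0 < p := lt_of_lt_of_le zero_lt_one hp
  have hq0 : (0:ℝ) < 1/p := by positivity
  generalize hn : (Finset.univ.image f).card = n
  induction n using Nat.strong_induction_on generalizing f with
  | _ n ih =>
  have hRHS0 : 0 ≤ C * ∑ e, ν e * |f (tgt e) - f (src e)| / d e := by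
    apply mul_nonneg hC
    apply Finset.sum_nonneg
    intro e _
    have := hν0 e; have := (hd e).le; positivity
  by_cases hzero : ∀ x, f x = 0
  · have : (∑ x, μ x * f x ^ p) = 0 := by
      apply Finset.sum_eq_zero; intro x _
      rw [hzero x, Real.zero_rpow hp0.ne', mul_zero]
    rw [this, Real.zero_rpow hq0.ne']
    exact hRHS0
  · push_neg at hzero
    obtain ⟨x0, hx0⟩ := hzero
    have hVne : (Finset.univ : Finset V).Nonempty := ⟨x0, mem_univ _⟩
    set T := Finset.univ.image f with hT
    have hTne : T.Nonempty := hVne.image f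
    set M := T.max' hTne with hM
    have hMmem : M ∈ T := T.max'_mem hTne
    have hfleM : ∀ x, f x ≤ M := fun x => T.le_max' _ (Finset.mem_image_of_mem f (mem_univ x))
    have hM0 : 0 < M := lt_of_lt_of_le ((hf0 x0).lt_of_ne (Ne.symm hx0)) (hfleM x0)
    set T' := T.erase M with hT'
    by_cases hT'ne : T'.Nonempty
    swap
    · -- f is constant M; contradiction with hsupp
      exfalso
      rw [Finset.not_nonempty_iff_eq_empty] at hT'ne
      have hconst : ∀ x, f x = M := by
        intro x
        have hx : f x ∈ T := Finset.mem_image_of_mem f (mem_univ x)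
        by_contra hne
        have hmem : f x ∈ T' := by rw [hT']; exact Finset.mem_erase.2 ⟨hne, hx⟩
        rw [hT'ne] at hmem
        exact Finset.notMem_empty _ hmem
      have heq : Finset.univ.filter (fun x => 0 < f x) = Finset.univ := by
        apply Finset.filter_true_of_mem
        intro x _; rw [hconst x]; exact hM0
      rw [heq, hμ1] at hsupp
      linarith
    · set m := T'.max' hT'ne with hm
      have hmmem : m ∈ T' := T'.max'_mem hT'ne
      have hmT : m ∈ T := Finset.mem_of_mem_erase hmmem
      have hmM : m ≠ M := Finset.ne_of_mem_erase hmmem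
      have hmltM : m < M := lt_of_le_of_ne (T.le_max' _ hmT) hmM
      have hm0 : 0 ≤ m := by
        obtain ⟨x, _, hx⟩ := Finset.mem_image.1 hmT
        rw [← hx]; exact hf0 x
      have hlem : ∀ x, f x ≠ M → f x ≤ m := by
        intro x hx
        exact T'.le_max' _ (Finset.mem_erase.2 ⟨hx, Finset.mem_image_of_mem f (mem_univ x)⟩)
      set f' := fun x => min (f x) m with hf'
      have hf'0 : ∀ x, 0 ≤ f' x := fun x => le_min (hf0 x) hm0
      have hf'le : ∀ x, f' x ≤ f x := fun x => min_le_left _ _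
      have hf'valM : ∀ x, f x = M → f' x = m := by
        intro x hx
        show min (f x) m = m
        rw [min_eq_right (by rw [hx]; exact hmltM.le)]
      have hf'valne : ∀ x, f x ≠ M → f' x = f x := by
        intro x hx
        show min (f x) m = f x
        rw [min_eq_left (hlem x hx)]
      set c := M - m with hc
      have hc0 : 0 < c := by rw [hc]; linarith
      set A := Finset.univ.filter (fun x => f x = M) with hA
      have hmemA : ∀ x, x ∈ A ↔ f x = M := by intro x; simp [hA]
      -- pointwise decomposition
      have hdecomp : ∀ x, f x = f' x + c * (if f x = M then 1 else 0) := by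
        intro x
        by_cases hx : f x = M
        · rw [if_pos hx, hf'valM x hx, hx, hc]; ring
        · rw [if_neg hx, hf'valne x hx]; ring
      -- card decreases
      have hcard : (Finset.univ.image f').card < n := by
        have hsub : Finset.univ.image f' ⊆ T' := by
          intro v hv
          obtain ⟨x, _, hx⟩ := Finset.mem_image.1 hv
          by_cases hfx : f x = M
          · rw [← hx, hf'valM x hfx]; exact hmmem
          · rw [← hx, hf'valne x hfx]
            exact Finset.mem_erase.2 ⟨hfx, Finset.mem_image_of_mem f (mem_univ x)⟩
        calc (Finset.univ.image f').card ≤ T'.card := Finset.card_le_card hsub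
          _ < T.card := Finset.card_erase_lt_of_mem hMmem
          _ = n := hn
      -- support of f'
      have hsupp' : ∑ x ∈ Finset.univ.filter (fun x => 0 < f' x), μ x ≤ 1/2 := by
        refine le_trans (Finset.sum_le_sum_of_subset_of_nonneg ?_ (fun x _ _ => hμ0 x)) hsupp
        intro x hx
        simp only [mem_filter, mem_univ, true_and] at hx ⊢
        exact lt_of_lt_of_le hx (hf'le x)
      -- μ(A) ≤ 1/2
      have hAsub : A ⊆ Finset.univ.filter (fun x => 0 < f x) := by
        intro x hx
        rw [hmemA] at hx
        simp only [mem_filter, mem_univ, true_and]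
        rw [hx]; exact hM0
      have hμA : ∑ x ∈ A, μ x ≤ 1/2 :=
        le_trans (Finset.sum_le_sum_of_subset_of_nonneg hAsub (fun x _ _ => hμ0 x)) hsupp
      have hμA0 : 0 ≤ ∑ x ∈ A, μ x := Finset.sum_nonneg fun x _ => hμ0 x
      have hμpow : ∀ x : V, (μ x ^ (1/p)) ^ p = μ x := by
        intro x
        rw [← Real.rpow_mul (hμ0 x), one_div_mul_cancel hp0.ne', Real.rpow_one]
      -- Minkowski step
      set F := fun x => μ x ^ (1/p) * f' x with hF
      set G := fun x => μ x ^ (1/p) * (c * (if f x = M then 1 else 0)) with hG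
      have hFp : ∀ x, |F x| ^ p = μ x * f' x ^ p := by
        intro x
        rw [abs_of_nonneg (mul_nonneg (Real.rpow_nonneg (hμ0 x) _) (hf'0 x)),
          Real.mul_rpow (Real.rpow_nonneg (hμ0 x) _) (hf'0 x), hμpow x]
      have hGp : ∀ x, |G x| ^ p = μ x * c ^ p * (if f x = M then 1 else 0) := by
        intro x
        by_cases hx : f x = M
        · rw [hG]
          simp only [if_pos hx, mul_one]
          rw [abs_of_nonneg (mul_nonneg (Real.rpow_nonneg (hμ0 x) _) hc0.le),
            Real.mul_rpow (Real.rpow_nonneg (hμ0 x) _) hc0.le, hμpow x]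
        · rw [hG]
          simp only [if_neg hx, mul_zero, abs_zero]
          rw [Real.zero_rpow hp0.ne']
      have hFG : ∀ x, μ x * f x ^ p = |F x + G x| ^ p := by
        intro x
        rw [hF, hG]
        simp only
        rw [← mul_add, ← hdecomp x,
          abs_of_nonneg (mul_nonneg (Real.rpow_nonneg (hμ0 x) _) (hf0 x)),
          Real.mul_rpow (Real.rpow_nonneg (hμ0 x) _) (hf0 x), hμpow x]
      have hcppow : (c ^ p) ^ (1/p) = c := by
        rw [← Real.rpow_mul hc0.le, mul_one_div, div_self hp0.ne', Real.rpow_one]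
      have hmink : (∑ x, μ x * f x ^ p) ^ (1/p) ≤
          (∑ x, μ x * f' x ^ p) ^ (1/p) + c * (∑ x ∈ A, μ x) ^ (1/p) := by
        calc (∑ x, μ x * f x ^ p) ^ (1/p)
            = (∑ x, |F x + G x| ^ p) ^ (1/p) := by
              congr 1; exact Finset.sum_congr rfl fun x _ => hFG x
          _ ≤ (∑ x, |F x| ^ p) ^ (1/p) + (∑ x, |G x| ^ p) ^ (1/p) :=
              Real.Lp_add_le Finset.univ F G hp
          _ = (∑ x, μ x * f' x ^ p) ^ (1/p) + c * (∑ x ∈ A, μ x) ^ (1/p) := by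
              congr 1
              · congr 1; exact Finset.sum_congr rfl fun x _ => hFp x
              · have : (∑ x, |G x| ^ p) = c ^ p * ∑ x ∈ A, μ x := by
                  rw [Finset.mul_sum]
                  rw [← Finset.sum_filter_add_sum_filter_not Finset.univ (fun x => f x = M)
                    (fun x => |G x| ^ p)]
                  have h1 : ∑ x ∈ Finset.univ.filter (fun x => f x = M), |G x| ^ p
                      = ∑ x ∈ A, c ^ p * μ x := by
                    apply Finset.sum_congr rfl
                    intro x hx
                    rw [hmemA] at hx
                    rw [hGp x, if_pos hx]; ring
                  have h2 : ∑ x ∈ Finset.univ.filter (fun x => ¬ f x = M), |G x| ^ p = 0 := by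
                    apply Finset.sum_eq_zero
                    intro x hx
                    simp only [mem_filter, mem_univ, true_and] at hx
                    rw [hGp x, if_neg hx, mul_zero]
                  rw [h1, h2, add_zero]
                rw [this, Real.mul_rpow (by positivity) hμA0, hcppow]
      -- coarea
      have hedge : ∀ e, |f (tgt e) - f (src e)| = |f' (tgt e) - f' (src e)|
          + c * (if (src e ∈ A ∧ tgt e ∉ A) ∨ (src e ∉ A ∧ tgt e ∈ A) then 1 else 0) := by
        intro e
        by_cases hs : f (src e) = M <;> by_cases ht : f (tgt e) = M
        · rw [if_neg (by rw [hmemA, hmemA]; tauto), hf'valM _ hs, hf'valM _ ht, hs, ht]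
          simp
        · rw [if_pos (by rw [hmemA, hmemA]; tauto), hf'valM _ hs, hf'valne _ ht, hs]
          have h1 : f (tgt e) ≤ m := hlem _ ht
          rw [abs_of_nonpos (by linarith), abs_of_nonpos (by linarith), hc]; ring
        · rw [if_pos (by rw [hmemA, hmemA]; tauto), hf'valM _ ht, hf'valne _ hs, ht]
          have h1 : f (src e) ≤ m := hlem _ hs
          rw [abs_of_nonneg (by linarith), abs_of_nonneg (by linarith), hc]; ring
        · rw [if_neg (by rw [hmemA, hmemA]; tauto), hf'valne _ hs, hf'valne _ ht]
          simp
      have hcoarea : ∑ e, ν e * |f (tgt e) - f (src e)| / d e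
          = (∑ e, ν e * |f' (tgt e) - f' (src e)| / d e)
            + c * ∑ e, (if (src e ∈ A ∧ tgt e ∉ A) ∨ (src e ∉ A ∧ tgt e ∈ A)
                then ν e / d e else 0) := by
        rw [Finset.mul_sum, ← Finset.sum_add_distrib]
        apply Finset.sum_congr rfl
        intro e _
        rw [hedge e]
        by_cases hcr : (src e ∈ A ∧ tgt e ∉ A) ∨ (src e ∉ A ∧ tgt e ∈ A)
        · rw [if_pos hcr, if_pos hcr]; field_simp
        · rw [if_neg hcr, if_neg hcr]; ring
      -- conclude
      have hIH := ih _ hcard f' hf'0 hsupp' rfl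
      have hA' := hiso A hμA
      calc (∑ x, μ x * f x ^ p) ^ (1/p)
          ≤ (∑ x, μ x * f' x ^ p) ^ (1/p) + c * (∑ x ∈ A, μ x) ^ (1/p) := hmink
        _ ≤ (C * ∑ e, ν e * |f' (tgt e) - f' (src e)| / d e)
            + c * (C * ∑ e, (if (src e ∈ A ∧ tgt e ∉ A) ∨ (src e ∉ A ∧ tgt e ∈ A)
                then ν e / d e else 0)) :=
            add_le_add hIH (mul_le_mul_of_nonneg_left hA' hc0.le)
        _ = C * ∑ e, ν e * |f (tgt e) - f (src e)| / d e := by rw [hcoarea]; ring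

/-- Median form of the graph Sobolev inequality: with vertex measure
`μ(x) = ∑_{e⁺=x} ν(e)/2 + ∑_{e⁻=x} ν(e)/2` and isoperimetric inequality
`min{μ(A), μ(Aᶜ)}^{1/δ′} ≤ C·Per(A)`, every `g` with median `0` satisfies
`‖g‖_{L^{δ′}(μ)} ≤ C‖g‖_{W^{1,1}(ν,d)}`. -/
theorem sobolev_median_form {V E : Type*} [Fintype V] [Fintype E] [DecidableEq V]
    (src tgt : E → V)
    (ν : E → ℝ) (hν0 : ∀ e, 0 ≤ ν e) (hν1 : ∑ e, ν e = 1)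
    (d : E → ℝ) (hd : ∀ e, 0 < d e)
    (δ δ' C : ℝ) (hδ : 1 ≤ δ) (hconj : 1 / δ + 1 / δ' = 1) (hC : 0 < C)
    (μ : V → ℝ)
    (hμ : ∀ x, μ x = (∑ e ∈ Finset.univ.filter (fun e => tgt e = x), ν e / 2)
                   + ∑ e ∈ Finset.univ.filter (fun e => src e = x), ν e / 2)
    (hiso : ∀ A : Finset V,
      (min (∑ x ∈ A, μ x) (∑ x ∈ Aᶜ, μ x)) ^ (1 / δ') ≤
        C * ∑ e, (if (src e ∈ A ∧ tgt e ∉ A) ∨ (src e ∉ A ∧ tgt e ∈ A)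
          then ν e / d e else 0))
    (g : V → ℝ)
    (hmed1 : ∑ x ∈ Finset.univ.filter (fun x => 0 < g x), μ x ≤ 1 / 2)
    (hmed2 : ∑ x ∈ Finset.univ.filter (fun x => g x < 0), μ x ≤ 1 / 2) :
    (∑ x, μ x * |g x| ^ δ') ^ (1 / δ') ≤
      C * ∑ e, ν e * |g (tgt e) - g (src e)| / d e := by
  classical
  have hμ0 : ∀ x, 0 ≤ μ x := by
    intro x
    rw [hμ x]
    apply add_nonneg <;> exact Finset.sum_nonneg fun e _ => by have := hν0 e; positivity
  have hμ1 : ∑ x, μ x = 1 := by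
    have h1 : ∑ x, ∑ e ∈ Finset.univ.filter (fun e => tgt e = x), ν e / 2
        = ∑ e, ν e / 2 := Finset.sum_fiberwise _ _ _
    have h2 : ∑ x, ∑ e ∈ Finset.univ.filter (fun e => src e = x), ν e / 2
        = ∑ e, ν e / 2 := Finset.sum_fiberwise _ _ _
    calc ∑ x, μ x = ∑ x, ((∑ e ∈ Finset.univ.filter (fun e => tgt e = x), ν e / 2)
                   + ∑ e ∈ Finset.univ.filter (fun e => src e = x), ν e / 2) :=
          Finset.sum_congr rfl fun x _ => hμ x
      _ = (∑ e, ν e / 2) + ∑ e, ν e / 2 := by rw [Finset.sum_add_distrib, h1, h2]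
      _ = 1 := by rw [← Finset.sum_add_distrib]; rw [show ∑ e, (ν e / 2 + ν e / 2) = ∑ e, ν e
            from Finset.sum_congr rfl fun e _ => by ring, hν1]
  have hδ0 : (0:ℝ) < δ := by linarith
  have h1δpos : (0:ℝ) < 1/δ := by positivity
  have h1δle : 1/δ ≤ 1 := by rw [div_le_one hδ0]; exact hδ
  have hδ'eq : 1/δ' = 1 - 1/δ := by linarith
  have hδ'1 : 1 < δ' := by
    rcases eq_or_lt_of_le (show (0:ℝ) ≤ 1/δ' by rw [hδ'eq]; linarith) with h0 | h0
    · -- degenerate case: δ' = 0, contradiction with hiso ∅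
      exfalso
      have hδ'0 : δ' = 0 := by
        rcases div_eq_zero_iff.mp h0.symm with h | h
        · exact absurd h one_ne_zero
        · exact h
      have h := hiso ∅
      have hl : ∑ x ∈ (∅ : Finset V), μ x = 0 := Finset.sum_empty
      have hr : ∑ x ∈ (∅ : Finset V)ᶜ, μ x = 1 := by rw [Finset.compl_empty]; exact hμ1
      have hper : (∑ e, (if (src e ∈ (∅ : Finset V) ∧ tgt e ∉ (∅ : Finset V)) ∨
          (src e ∉ (∅ : Finset V) ∧ tgt e ∈ (∅ : Finset V)) then ν e / d e else 0)) = 0 :=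
        Finset.sum_eq_zero fun e _ => by simp
      rw [hl, hr, hper, mul_zero, hδ'0] at h
      norm_num at h
    · have hδ'pos : 0 < δ' := by
        by_contra hne
        push_neg at hne
        have : 1/δ' ≤ 0 := div_nonpos_of_nonneg_of_nonpos zero_le_one hne
        linarith
      rw [← div_lt_one hδ'pos]
      rw [hδ'eq]; linarith
  have hδ'pos : (0:ℝ) < δ' := lt_trans zero_lt_one hδ'1
  have hp : 1 ≤ δ' := hδ'1.le
  -- one-sided isoperimetric inequality
  have hiso' : ∀ A : Finset V, (∑ x ∈ A, μ x) ≤ 1/2 →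
      (∑ x ∈ A, μ x) ^ (1/δ') ≤
        C * ∑ e, (if (src e ∈ A ∧ tgt e ∉ A) ∨ (src e ∉ A ∧ tgt e ∈ A)
          then ν e / d e else 0) := by
    intro A hA
    have hsum := Finset.sum_add_sum_compl A μ
    rw [hμ1] at hsum
    have hmin : min (∑ x ∈ A, μ x) (∑ x ∈ Aᶜ, μ x) = ∑ x ∈ A, μ x :=
      min_eq_left (by linarith)
    have h := hiso A
    rw [hmin] at h
    exact h
  set gp := fun x => max (g x) 0 with hgp
  set gn := fun x => max (-g x) 0 with hgn
  have hsuppP : ∑ x ∈ Finset.univ.filter (fun x => 0 < gp x), μ x ≤ 1/2 := by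
    have heq : Finset.univ.filter (fun x => 0 < gp x)
        = Finset.univ.filter (fun x => 0 < g x) := by
      apply Finset.filter_congr; intro x _; simp [hgp, lt_max_iff]
    rw [heq]; exact hmed1
  have hsuppN : ∑ x ∈ Finset.univ.filter (fun x => 0 < gn x), μ x ≤ 1/2 := by
    have heq : Finset.univ.filter (fun x => 0 < gn x)
        = Finset.univ.filter (fun x => g x < 0) := by
      apply Finset.filter_congr; intro x _; simp [hgn, lt_max_iff]
    rw [heq]; exact hmed2
  have hP := sobolev_nonneg src tgt ν hν0 d hd δ' C hp hC.le μ hμ0 hμ1 hiso' gp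
    (fun x => le_max_right _ _) hsuppP
  have hN := sobolev_nonneg src tgt ν hν0 d hd δ' C hp hC.le μ hμ0 hμ1 hiso' gn
    (fun x => le_max_right _ _) hsuppN
  have hsplit : ∑ x, μ x * |g x| ^ δ'
      = (∑ x, μ x * gp x ^ δ') + (∑ x, μ x * gn x ^ δ') := by
    rw [← Finset.sum_add_distrib]
    apply Finset.sum_congr rfl
    intro x _
    rcases le_total 0 (g x) with h | h
    · rw [abs_of_nonneg h, hgp, hgn]
      simp only
      rw [max_eq_left h, max_eq_right (neg_nonpos.2 h), Real.zero_rpow hδ'pos.ne',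
        mul_zero, add_zero]
    · rw [abs_of_nonpos h, hgp, hgn]
      simp only
      rw [max_eq_right h, max_eq_left (neg_nonneg.2 h), Real.zero_rpow hδ'pos.ne',
        mul_zero, zero_add]
  have hRsplit : ∑ e, ν e * |g (tgt e) - g (src e)| / d e
      = (∑ e, ν e * |gp (tgt e) - gp (src e)| / d e)
        + ∑ e, ν e * |gn (tgt e) - gn (src e)| / d e := by
    rw [← Finset.sum_add_distrib]
    apply Finset.sum_congr rfl
    intro e _
    rw [abs_split (g (tgt e)) (g (src e)), hgp, hgn]
    simp only
    ring
  have hS0 : ∀ h : V → ℝ, 0 ≤ ∑ x, μ x * h x ^ δ' → True := fun _ _ => trivial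
  have hSP0 : 0 ≤ ∑ x, μ x * gp x ^ δ' :=
    Finset.sum_nonneg fun x _ => mul_nonneg (hμ0 x) (Real.rpow_nonneg (le_max_right _ _) _)
  have hSN0 : 0 ≤ ∑ x, μ x * gn x ^ δ' :=
    Finset.sum_nonneg fun x _ => mul_nonneg (hμ0 x) (Real.rpow_nonneg (le_max_right _ _) _)
  calc (∑ x, μ x * |g x| ^ δ') ^ (1/δ')
      = ((∑ x, μ x * gp x ^ δ') + (∑ x, μ x * gn x ^ δ')) ^ (1/δ') := by rw [hsplit]
    _ ≤ (∑ x, μ x * gp x ^ δ') ^ (1/δ') + (∑ x, μ x * gn x ^ δ') ^ (1/δ') :=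
        rpow_add_le' hSP0 hSN0 hp
    _ ≤ (C * ∑ e, ν e * |gp (tgt e) - gp (src e)| / d e)
        + C * ∑ e, ν e * |gn (tgt e) - gn (src e)| / d e := add_le_add hP hN
    _ = C * ∑ e, ν e * |g (tgt e) - g (src e)| / d e := by rw [hRsplit]; ring
end

section
/- Let J be a countable index set, δ ≥ 1, δ', β ≥ 1, C_γ > 0, and L : J → (0,∞) a function such that for every s ∈ [1, β], |{j ∈ J : L(j) ≤ s}| ≥ C_γ^{−1} s^{δ'}. Then for any δ_iso ≥ 1, ∑_{j ∈ J} L(j)^{−δ_iso} ≥ (δ_iso / C_γ) ∫₁^β s^{δ' − δ_iso − 1} ds. In particular, when δ' = δ_iso = δ, ∑_{j ∈ J} L(j)^{−δ} ≥ (δ/C_γ) ln β. -/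
open MeasureTheory

/-- If the counting function of `L : J → (0,∞)` satisfies
`|{j : L(j) ≤ s}| ≥ C_γ⁻¹ s^{δ′}` for `s ∈ [1,β]`, then
`∑_j L(j)^{−δ_iso} ≥ (δ_iso/C_γ) ∫₁^β s^{δ′−δ_iso−1} ds`; in particular when `δ′ = δ_iso`
the right-hand side is `(δ_iso/C_γ) ln β`. -/
theorem lipschitz_spectral_sum_bound {J : Type*} [Countable J] [MeasurableSpace J]
    [MeasurableSingletonClass J]
    (L : J → ℝ) (hL : ∀ j, 0 < L j)
    (δ' β Cγ δiso : ℝ) (hδ' : 1 ≤ δ') (hβ : 1 ≤ β) (hC : 0 < Cγ) (hδiso : 1 ≤ δiso)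
    (hcount : ∀ s, 1 ≤ s → s ≤ β →
      ENNReal.ofReal (Cγ⁻¹ * s ^ δ') ≤ Measure.count {j | L j ≤ s}) :
    ENNReal.ofReal (δiso / Cγ * ∫ s in (1 : ℝ)..β, s ^ (δ' - δiso - 1)) ≤
        ∑' j, ENNReal.ofReal (L j ^ (-δiso)) ∧
      (δ' = δiso →
        ENNReal.ofReal (δiso / Cγ * Real.log β) ≤ ∑' j, ENNReal.ofReal (L j ^ (-δiso))) := by
  have hβ0 : (0:ℝ) < β := lt_of_lt_of_le one_pos hβ
  -- continuity helper
  have hrc : ∀ r : ℝ, ContinuousOn (fun s : ℝ => s ^ r) {s : ℝ | 0 < s} := fun r s hs =>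
    (Real.continuousAt_rpow_const s r (Or.inl (ne_of_gt hs))).continuousWithinAt
  have hint : ∀ (c r a b : ℝ), 0 < a → IntegrableOn (fun s : ℝ => c * s ^ r) (Set.Icc a b) := by
    intro c r a b ha
    exact (continuousOn_const.mul ((hrc r).mono (fun s hs => lt_of_lt_of_le ha hs.1))).integrableOn_Icc
  set g : ℝ → ENNReal := fun s => ENNReal.ofReal (δiso * s ^ (-δiso - 1)) with hg
  have hgmeas : Measurable g :=
    ENNReal.measurable_ofReal.comp (measurable_const.mul (measurable_id.pow_const _))
  -- Step A : pointwise bound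
  have hA : ∀ j, ∫⁻ s in Set.Ioc (1:ℝ) β, Set.indicator {s | L j ≤ s} g s ≤
      ENNReal.ofReal (L j ^ (-δiso)) := by
    intro j
    have hLj := hL j
    have h1 : {s : ℝ | L j ≤ s} = Set.Ici (L j) := rfl
    rw [h1, lintegral_indicator measurableSet_Ici, Measure.restrict_restrict measurableSet_Ici]
    by_cases hjβ : L j ≤ β
    · have hsub : Set.Ici (L j) ∩ Set.Ioc 1 β ⊆ Set.Icc (L j) β := by
        rintro s ⟨h1s, h2s, h3s⟩; exact ⟨h1s, h3s⟩
      calc ∫⁻ s in Set.Ici (L j) ∩ Set.Ioc 1 β, g s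
          ≤ ∫⁻ s in Set.Icc (L j) β, g s := lintegral_mono_set hsub
        _ = ∫⁻ s in Set.Ioc (L j) β, g s := by
            rw [Measure.restrict_congr_set Ioc_ae_eq_Icc]
        _ = ENNReal.ofReal (∫ s in Set.Ioc (L j) β, δiso * s ^ (-δiso - 1)) := by
            rw [ofReal_integral_eq_lintegral_ofReal]
            · exact ((hint δiso _ _ _ hLj).mono_set Set.Ioc_subset_Icc_self)
            · filter_upwards [ae_restrict_mem measurableSet_Ioc] with s hs
              exact mul_nonneg (by linarith) (Real.rpow_nonneg (le_of_lt (lt_trans hLj hs.1)) _)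
        _ ≤ ENNReal.ofReal (L j ^ (-δiso)) := by
            apply ENNReal.ofReal_le_ofReal
            rw [← intervalIntegral.integral_of_le hjβ, intervalIntegral.integral_const_mul,
              integral_rpow]
            · have hδ0 : δiso ≠ 0 := by positivity
              have : -δiso - 1 + 1 = -δiso := by ring
              rw [this]
              have hb : 0 ≤ β ^ (-δiso) := Real.rpow_nonneg (le_of_lt hβ0) _
              have heq : δiso * ((β ^ (-δiso) - L j ^ (-δiso)) / (-δiso)) =
                  L j ^ (-δiso) - β ^ (-δiso) := by
                rw [mul_div_assoc', mul_comm δiso, mul_div_assoc, div_neg, div_self hδ0]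
                ring
              rw [heq]; linarith
            · refine Or.inr ⟨by intro h; nlinarith, ?_⟩
              intro h0
              rcases h0 with h0
              have := h0.1
              rcases Set.mem_uIcc.mp h0 with ⟨h1, h2⟩ | ⟨h1, h2⟩ <;> nlinarith
    · have hsub : Set.Ici (L j) ∩ Set.Ioc 1 β ⊆ (∅ : Set ℝ) := by
        rintro s ⟨h1s, h2s, h3s⟩; exact absurd (le_trans h1s h3s) hjβ
      have : Set.Ici (L j) ∩ Set.Ioc 1 β = ∅ := Set.eq_empty_iff_forall_notMem.mpr
        (fun s hs => hsub hs)
      rw [this]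
      simp
  -- the product set is measurable
  have hAset : MeasurableSet {p : J × ℝ | L p.1 ≤ p.2} := by
    have hU : {p : J × ℝ | L p.1 ≤ p.2} = ⋃ j, ({j} : Set J) ×ˢ Set.Ici (L j) := by
      ext ⟨j, s⟩
      constructor
      · intro h; exact Set.mem_iUnion.mpr ⟨j, rfl, h⟩
      · intro h
        obtain ⟨i, hi1, hi2⟩ := Set.mem_iUnion.mp h
        cases hi1; exact hi2
    rw [hU]
    exact MeasurableSet.iUnion fun j => (measurableSet_singleton j).prod measurableSet_Ici
  haveI : SFinite (Measure.count : Measure J) := by rw [Measure.count]; infer_instance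
  have key : ENNReal.ofReal (δiso / Cγ * ∫ s in (1 : ℝ)..β, s ^ (δ' - δiso - 1)) ≤
      ∑' j, ENNReal.ofReal (L j ^ (-δiso)) := by
    have hswap : ∫⁻ s in Set.Ioc (1:ℝ) β,
        (∫⁻ j, Set.indicator {s' | L j ≤ s'} g s ∂Measure.count) ≤
        ∑' j, ENNReal.ofReal (L j ^ (-δiso)) := by
      rw [← lintegral_count, ← lintegral_lintegral_swap]
      · exact lintegral_mono fun j => hA j
      · apply Measurable.aemeasurable
        have hfun : (Function.uncurry fun j s => Set.indicator {s' | L j ≤ s'} g s) =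
            Set.indicator {p : J × ℝ | L p.1 ≤ p.2} (fun p => g p.2) := by
          ext ⟨j, s⟩
          by_cases h : L j ≤ s <;>
            simp [Function.uncurry, Set.indicator, h]
        rw [hfun]
        exact (hgmeas.comp measurable_snd).indicator hAset
    refine le_trans ?_ hswap
    have hinner : ∀ s, 1 ≤ s → s ≤ β →
        ENNReal.ofReal (δiso / Cγ * s ^ (δ' - δiso - 1)) ≤
          ∫⁻ j, Set.indicator {s' | L j ≤ s'} g s ∂Measure.count := by
      intro s hs1 hsβ
      have hs0 : (0:ℝ) < s := lt_of_lt_of_le one_pos hs1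
      have hfj : (fun j => Set.indicator {s' | L j ≤ s'} g s) =
          Set.indicator {j | L j ≤ s} (fun _ => g s) := by
        ext j
        by_cases h : L j ≤ s <;> simp [Set.indicator, h]
      rw [hfj, lintegral_indicator ((Set.to_countable _).measurableSet), setLIntegral_const]
      calc ENNReal.ofReal (δiso / Cγ * s ^ (δ' - δiso - 1))
          = g s * ENNReal.ofReal (Cγ⁻¹ * s ^ δ') := by
            rw [hg, ← ENNReal.ofReal_mul
              (mul_nonneg (by linarith) (Real.rpow_nonneg hs0.le _))]
            congr 1
            rw [show δ' - δiso - 1 = (-δiso - 1) + δ' by ring, Real.rpow_add hs0]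
            field_simp
        _ ≤ g s * Measure.count {j | L j ≤ s} := mul_le_mul_right (hcount s hs1 hsβ) _
    calc ENNReal.ofReal (δiso / Cγ * ∫ s in (1 : ℝ)..β, s ^ (δ' - δiso - 1))
        = ∫⁻ s in Set.Ioc (1:ℝ) β, ENNReal.ofReal (δiso / Cγ * s ^ (δ' - δiso - 1)) := by
          rw [intervalIntegral.integral_of_le hβ, ← integral_const_mul,
            ofReal_integral_eq_lintegral_ofReal]
          · exact (hint (δiso / Cγ) _ _ _ one_pos).mono_set Set.Ioc_subset_Icc_self
          · filter_upwards [ae_restrict_mem measurableSet_Ioc] with s hs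
            exact mul_nonneg (div_nonneg (by linarith) hC.le)
              (Real.rpow_nonneg (le_of_lt (lt_trans one_pos hs.1)) _)
      _ ≤ ∫⁻ s in Set.Ioc (1:ℝ) β,
            (∫⁻ j, Set.indicator {s' | L j ≤ s'} g s ∂Measure.count) := by
          refine lintegral_mono_ae ?_
          filter_upwards [ae_restrict_mem measurableSet_Ioc] with s hs
          exact hinner s hs.1.le hs.2
  refine ⟨key, fun h => ?_⟩
  subst h
  have hlog : ∫ s in (1 : ℝ)..β, s ^ (δ' - δ' - 1) = Real.log β := by
    rw [show δ' - δ' - 1 = (-1 : ℝ) by ring]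
    simp only [Real.rpow_neg_one]
    rw [integral_inv_of_pos one_pos hβ0, div_one]
  rwa [hlog] at key
end

section
/- Let X be a finite metric space and let q_δ(S) = Per(S) / min{μ(S), μ(Sᶜ)}^{(δ−1)/δ} be the isoperimetric ratio of a subset S of the vertex set of a finite directed graph G with respect to edge probability measure ν, edge lengths d, vertex measure μ = μ_α(ν), and exponent δ ≥ 1. If S ⊆ V(G) satisfies μ(S) ≤ μ(Sᶜ) and S₁, …, Sₙ are the connected components of S, then q_δ(S) ≥ min_{1 ≤ j ≤ n} q_δ(Sⱼ). -/
/-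
Put `θ = (δ - 1)/δ ∈ [0, 1]`. Every component `C` lies in `S`, so
`μ(C) ≤ μ(S) ≤ μ(Sᶜ) ≤ μ(Cᶜ)` and `q(C) = Per(C)/μ(C)^θ`. An edge leaving a component cannot
end in `S` outside that component, so the edge boundary of `S` is the disjoint union of those of
its components and `Per(S) = ∑ Per(C)`; likewise `μ(S) = ∑ μ(C)`, hence
`μ(S)^θ ≤ ∑ μ(C)^θ` by subadditivity of `t ↦ t^θ`. A ratio of sums is at least the smallest
ratio of the summands, which gives `min q(C) ≤ Per(S)/μ(S)^θ = q(S)`.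
-/

/-- Undirected adjacency induced by a directed edge set. -/
def GAdj {V E : Type*} (src tgt : E → V) (x y : V) : Prop :=
  ∃ e, (src e = x ∧ tgt e = y) ∨ (src e = y ∧ tgt e = x)

/-- Reachability within a vertex set `S` (paths staying inside `S`). -/
def ReachIn {V E : Type*} (src tgt : E → V) (S : Finset V) (x y : V) : Prop :=
  Relation.ReflTransGen (fun a b => a ∈ S ∧ b ∈ S ∧ GAdj src tgt a b) x y

/-- `C` is a connected component of `S`: the set of vertices of `S` reachable within `S`
from some vertex of `S`. -/
def IsConnComponent {V E : Type*} (src tgt : E → V) (S C : Finset V) : Prop :=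
  ∃ x ∈ S, ∀ y, y ∈ C ↔ y ∈ S ∧ ReachIn src tgt S x y

open Finset

def edgeBoundary {V E : Type*} [Fintype E] [DecidableEq V] (src tgt : E → V) (A : Finset V) :
    Finset E :=
  univ.filter fun e => (src e ∈ A ∧ tgt e ∉ A) ∨ (src e ∉ A ∧ tgt e ∈ A)

@[simp]
theorem mem_edgeBoundary {V E : Type*} [Fintype E] [DecidableEq V] {src tgt : E → V}
    {A : Finset V} {e : E} :
    e ∈ edgeBoundary src tgt A ↔ (src e ∈ A ∧ tgt e ∉ A) ∨ (src e ∉ A ∧ tgt e ∈ A) := by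
  simp [edgeBoundary]

section Components

variable {V E : Type*} {src tgt : E → V}

theorem ReachIn.symm {S : Finset V} {x y : V} (h : ReachIn src tgt S x y) :
    ReachIn src tgt S y x :=
  Relation.reflTransGen_swap.1 <|
    Relation.ReflTransGen.mono (fun _ _ ⟨ha, hb, e, he⟩ => ⟨hb, ha, e, he.symm⟩) _ _ h

namespace IsConnComponent

variable {S C C' : Finset V}

theorem subset (hC : IsConnComponent src tgt S C) : C ⊆ S := by
  obtain ⟨x, -, hx⟩ := hC
  exact fun y hy => ((hx y).1 hy).1

theorem eq_of_mem_of_mem (hC : IsConnComponent src tgt S C) (hC' : IsConnComponent src tgt S C')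
    {a : V} (ha : a ∈ C) (ha' : a ∈ C') : C = C' := by
  obtain ⟨x, -, hx⟩ := hC
  obtain ⟨x', -, hx'⟩ := hC'
  have hxx' : ReachIn src tgt S x x' := ((hx a).1 ha).2.trans ((hx' a).1 ha').2.symm
  ext y
  rw [hx, hx']
  exact ⟨fun ⟨hy, h⟩ => ⟨hy, hxx'.symm.trans h⟩, fun ⟨hy, h⟩ => ⟨hy, hxx'.trans h⟩⟩

theorem mem_of_gAdj (hC : IsConnComponent src tgt S C) {x y : V} (hx : x ∈ C) (hy : y ∈ S)
    (hxy : GAdj src tgt x y) : y ∈ C := by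
  obtain ⟨w, -, hw⟩ := hC
  obtain ⟨hxS, hwx⟩ := (hw x).1 hx
  exact (hw y).2 ⟨hy, hwx.tail ⟨hxS, hy, hxy⟩⟩

theorem mem_edgeBoundary_iff [Fintype E] [DecidableEq V] (hC : IsConnComponent src tgt S C)
    {e : E} : e ∈ edgeBoundary src tgt C ↔
      e ∈ edgeBoundary src tgt S ∧ (src e ∈ C ∨ tgt e ∈ C) := by
  have hsub := hC.subset
  have hst : src e ∈ C → tgt e ∈ S → tgt e ∈ C := fun h h' =>
    hC.mem_of_gAdj h h' ⟨e, .inl ⟨rfl, rfl⟩⟩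
  have hts : tgt e ∈ C → src e ∈ S → src e ∈ C := fun h h' =>
    hC.mem_of_gAdj h h' ⟨e, .inr ⟨rfl, rfl⟩⟩
  simp only [mem_edgeBoundary]
  constructor
  · rintro (⟨hs, ht⟩ | ⟨hs, ht⟩)
    · exact ⟨.inl ⟨hsub hs, fun h => ht (hst hs h)⟩, .inl hs⟩
    · exact ⟨.inr ⟨fun h => hs (hts ht h), hsub ht⟩, .inr ht⟩
  · rintro ⟨⟨hs, ht⟩ | ⟨hs, ht⟩, hs' | ht'⟩
    · exact .inl ⟨hs', fun h => ht (hsub h)⟩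
    · exact absurd (hsub ht') ht
    · exact absurd (hsub hs') hs
    · exact .inr ⟨fun h => hs (hsub h), ht'⟩

end IsConnComponent

section Decomposition

variable {S : Finset V} {T : Finset (Finset V)}

theorem pairwiseDisjoint_of_isConnComponent (hT : ∀ C ∈ T, IsConnComponent src tgt S C) :
    (T : Set (Finset V)).PairwiseDisjoint id :=
  fun C hC C' hC' hne => disjoint_left.2 fun _ ha ha' =>
    hne <| (hT C hC).eq_of_mem_of_mem (hT C' hC') ha ha'

variable [DecidableEq V]

theorem biUnion_eq_of_isConnComponent (hT : ∀ C ∈ T, IsConnComponent src tgt S C)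
    (hcover : ∀ x ∈ S, ∃ C ∈ T, x ∈ C) : T.biUnion id = S := by
  ext x
  simp only [mem_biUnion, id]
  exact ⟨fun ⟨C, hC, hx⟩ => (hT C hC).subset hx, hcover x⟩

theorem sum_eq_sum_sum_of_isConnComponent {M : Type*} [AddCommMonoid M] (f : V → M)
    (hT : ∀ C ∈ T, IsConnComponent src tgt S C) (hcover : ∀ x ∈ S, ∃ C ∈ T, x ∈ C) :
    ∑ x ∈ S, f x = ∑ C ∈ T, ∑ x ∈ C, f x := by
  rw [← biUnion_eq_of_isConnComponent hT hcover,
    sum_biUnion (pairwiseDisjoint_of_isConnComponent hT)]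
  rfl

variable [Fintype E]

theorem edgeBoundary_eq_biUnion_of_isConnComponent [DecidableEq E]
    (hT : ∀ C ∈ T, IsConnComponent src tgt S C) (hcover : ∀ x ∈ S, ∃ C ∈ T, x ∈ C) :
    edgeBoundary src tgt S = T.biUnion (edgeBoundary src tgt) := by
  ext e
  simp only [mem_biUnion]
  refine ⟨fun he => ?_, fun ⟨C, hC, he⟩ => ((hT C hC).mem_edgeBoundary_iff.1 he).1⟩
  have hend : src e ∈ S ∨ tgt e ∈ S := by
    rw [mem_edgeBoundary] at he
    tauto
  obtain ⟨C, hC, hCe⟩ : ∃ C ∈ T, src e ∈ C ∨ tgt e ∈ C := by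
    rcases hend with h | h
    · obtain ⟨C, hC, hx⟩ := hcover _ h
      exact ⟨C, hC, .inl hx⟩
    · obtain ⟨C, hC, hx⟩ := hcover _ h
      exact ⟨C, hC, .inr hx⟩
  exact ⟨C, hC, (hT C hC).mem_edgeBoundary_iff.2 ⟨he, hCe⟩⟩

theorem pairwiseDisjoint_edgeBoundary_of_isConnComponent
    (hT : ∀ C ∈ T, IsConnComponent src tgt S C) :
    (T : Set (Finset V)).PairwiseDisjoint (edgeBoundary src tgt) := by
  intro C hC C' hC' hne
  refine disjoint_left.2 fun e he he' => hne ?_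
  obtain ⟨heS, hCe⟩ := (hT C hC).mem_edgeBoundary_iff.1 he
  obtain ⟨-, hC'e⟩ := (hT C' hC').mem_edgeBoundary_iff.1 he'
  have hsub := (hT C hC).subset
  have hsub' := (hT C' hC').subset
  rcases hCe with h | h <;> rcases hC'e with h' | h'
  · exact (hT C hC).eq_of_mem_of_mem (hT C' hC') h h'
  · exact absurd heS (by simp [hsub h, hsub' h'])
  · exact absurd heS (by simp [hsub h, hsub' h'])
  · exact (hT C hC).eq_of_mem_of_mem (hT C' hC') h h'

theorem sum_edgeBoundary_eq_sum_sum_of_isConnComponent {M : Type*} [AddCommMonoid M]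
    (w : E → M) (hT : ∀ C ∈ T, IsConnComponent src tgt S C)
    (hcover : ∀ x ∈ S, ∃ C ∈ T, x ∈ C) :
    ∑ e ∈ edgeBoundary src tgt S, w e = ∑ C ∈ T, ∑ e ∈ edgeBoundary src tgt C, w e := by
  classical
  rw [edgeBoundary_eq_biUnion_of_isConnComponent hT hcover,
    sum_biUnion (pairwiseDisjoint_edgeBoundary_of_isConnComponent hT)]

end Decomposition

end Components

theorem Finset.min_sum_sum_compl_eq_left_of_subset {α M : Type*} [Fintype α] [DecidableEq α]
    [AddCommMonoid M] [LinearOrder M] [IsOrderedAddMonoid M] {f : α → M} (hf : ∀ x, 0 ≤ f x)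
    {C S : Finset α} (hCS : C ⊆ S) (hS : ∑ x ∈ S, f x ≤ ∑ x ∈ Sᶜ, f x) :
    min (∑ x ∈ C, f x) (∑ x ∈ Cᶜ, f x) = ∑ x ∈ C, f x :=
  min_eq_left <| calc
    ∑ x ∈ C, f x ≤ ∑ x ∈ S, f x := sum_le_sum_of_subset_of_nonneg hCS fun x _ _ => hf x
    _ ≤ ∑ x ∈ Sᶜ, f x := hS
    _ ≤ ∑ x ∈ Cᶜ, f x :=
      sum_le_sum_of_subset_of_nonneg (compl_subset_compl.2 hCS) fun x _ _ => hf x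

theorem Finset.inf'_div_le_sum_div {ι : Type*} {s : Finset ι} (hs : s.Nonempty) {a b : ι → ℝ}
    {B : ℝ} (ha : ∀ i ∈ s, 0 ≤ a i) (hb : ∀ i ∈ s, 0 ≤ b i) (hbB : ∀ i ∈ s, b i ≤ B)
    (hBb : B ≤ ∑ i ∈ s, b i) :
    s.inf' hs (fun i => a i / b i) ≤ (∑ i ∈ s, a i) / B := by
  set m := s.inf' hs fun i => a i / b i
  have hm : ∀ i ∈ s, m ≤ a i / b i := fun i hi => inf'_le _ hi
  obtain ⟨i₀, hi₀⟩ := hs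
  rcases ((hb i₀ hi₀).trans (hbB i₀ hi₀)).eq_or_lt with hB | hB
  · -- `B = 0` forces every `b i` to vanish, and `x / 0 = 0`.
    have hb₀ : b i₀ = 0 := le_antisymm (hB ▸ hbB i₀ hi₀) (hb i₀ hi₀)
    simpa [← hB, hb₀] using hm i₀ hi₀
  have hm₀ : 0 ≤ m := le_inf' _ _ fun i hi => div_nonneg (ha i hi) (hb i hi)
  have hmb : ∀ i ∈ s, m * b i ≤ a i := fun i hi => by
    rcases (hb i hi).eq_or_lt with h | h
    · simpa [← h] using ha i hi
    · exact (le_div_iff₀ h).1 (hm i hi)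
  rw [le_div_iff₀ hB]
  calc m * B ≤ m * ∑ i ∈ s, b i := mul_le_mul_of_nonneg_left hBb hm₀
    _ = ∑ i ∈ s, m * b i := mul_sum _ _ _
    _ ≤ ∑ i ∈ s, a i := sum_le_sum hmb

theorem Real.rpow_sum_le_sum_rpow {ι : Type*} {s : Finset ι} (hs : s.Nonempty) {f : ι → ℝ}
    (hf : ∀ i ∈ s, 0 ≤ f i) {p : ℝ} (hp₀ : 0 ≤ p) (hp₁ : p ≤ 1) :
    (∑ i ∈ s, f i) ^ p ≤ ∑ i ∈ s, f i ^ p :=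
  le_sum_nonempty_of_subadditive_on_pred (· ^ p) (0 ≤ ·)
    (fun _ _ hx hy => Real.rpow_add_le_add_rpow hx hy hp₀ hp₁) (fun _ _ => add_nonneg) f s hs hf

theorem isoperimetric_ratio_ge_min_components_general {V E : Type*} [Fintype V] [Fintype E]
    [DecidableEq V]
    (src tgt : E → V)
    (ν : E → ℝ) (hν0 : ∀ e, 0 ≤ ν e)
    (d : E → ℝ) (hd : ∀ e, 0 < d e)
    (α : E → ℝ) (hα : ∀ e, 0 < α e ∧ α e < 1)
    (δ : ℝ) (hδ : 1 ≤ δ)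
    (μ : V → ℝ)
    (hμ : ∀ x, μ x = (∑ e ∈ Finset.univ.filter (fun e => tgt e = x), ν e * α e)
                   + ∑ e ∈ Finset.univ.filter (fun e => src e = x), ν e * (1 - α e))
    (Per : Finset V → ℝ)
    (hPer : ∀ A, Per A = ∑ e,
      if (src e ∈ A ∧ tgt e ∉ A) ∨ (src e ∉ A ∧ tgt e ∈ A) then ν e / d e else 0)
    (q : Finset V → ℝ)
    (hq : ∀ A, q A = Per A / (min (∑ x ∈ A, μ x) (∑ x ∈ Aᶜ, μ x)) ^ ((δ - 1) / δ))
    (S : Finset V) (hS : (∑ x ∈ S, μ x) ≤ ∑ x ∈ Sᶜ, μ x)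
    (n : ℕ) (hn : 0 < n) (Sj : Fin n → Finset V)
    (hcomp : ∀ j, IsConnComponent src tgt S (Sj j))
    (hcover : ∀ x ∈ S, ∃ j, x ∈ Sj j) :
    Finset.inf' Finset.univ ⟨⟨0, hn⟩, Finset.mem_univ _⟩ (fun j => q (Sj j)) ≤ q S := by
  classical
  set T := univ.image Sj
  have hT : ∀ C ∈ T, IsConnComponent src tgt S C := by simpa [T] using hcomp
  have hTcover : ∀ x ∈ S, ∃ C ∈ T, x ∈ C := by simpa [T] using hcover
  have hTne : T.Nonempty := ⟨Sj ⟨0, hn⟩, mem_image_of_mem _ (mem_univ _)⟩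
  set θ := (δ - 1) / δ
  have hθ₀ : 0 ≤ θ := div_nonneg (by linarith) (by linarith)
  have hθ₁ : θ ≤ 1 := div_le_one_of_le₀ (by linarith) (by linarith)
  have hμ₀ : ∀ x, 0 ≤ μ x := fun x => hμ x ▸ add_nonneg
    (sum_nonneg fun e _ => mul_nonneg (hν0 e) (hα e).1.le)
    (sum_nonneg fun e _ => mul_nonneg (hν0 e) (sub_nonneg.2 (hα e).2.le))
  have hμA : ∀ A : Finset V, 0 ≤ ∑ x ∈ A, μ x := fun A => sum_nonneg fun x _ => hμ₀ x
  have hPer' : ∀ A, Per A = ∑ e ∈ edgeBoundary src tgt A, ν e / d e := fun A => by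
    rw [hPer, edgeBoundary, sum_filter]
  have hPer₀ : ∀ A, 0 ≤ Per A := fun A =>
    hPer' A ▸ sum_nonneg fun e _ => div_nonneg (hν0 e) (hd e).le
  have hPerS : Per S = ∑ C ∈ T, Per C := by
    simpa only [hPer'] using sum_edgeBoundary_eq_sum_sum_of_isConnComponent _ hT hTcover
  have hq' : ∀ C ∈ T, q C = Per C / (∑ x ∈ C, μ x) ^ θ := fun C hC => by
    rw [hq, min_sum_sum_compl_eq_left_of_subset hμ₀ (hT C hC).subset hS]
  have hinf : univ.inf' _ (fun j => q (Sj j)) = T.inf' hTne q := (inf'_image _ q).symm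
  rw [hinf, inf'_congr _ rfl hq', hq, min_eq_left hS, hPerS]
  refine inf'_div_le_sum_div _ (fun C _ => hPer₀ C) (fun C _ => Real.rpow_nonneg (hμA C) θ)
    (fun C hC => Real.rpow_le_rpow (hμA C)
      (sum_le_sum_of_subset_of_nonneg (hT C hC).subset fun x _ _ => hμ₀ x) hθ₀) ?_
  rw [sum_eq_sum_sum_of_isConnComponent μ hT hTcover]
  exact Real.rpow_sum_le_sum_rpow hTne (fun C _ => hμA C) hθ₀ hθ₁

/-- The isoperimetric ratio of a set `S` with `μ(S) ≤ μ(Sᶜ)` is at least the minimum of the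
isoperimetric ratios of its connected components. -/
theorem isoperimetric_ratio_ge_min_components {V E : Type*} [Fintype V] [Fintype E]
    [DecidableEq V]
    (src tgt : E → V)
    (ν : E → ℝ) (hν0 : ∀ e, 0 ≤ ν e) (hν1 : ∑ e, ν e = 1)
    (d : E → ℝ) (hd : ∀ e, 0 < d e)
    (α : E → ℝ) (hα : ∀ e, 0 < α e ∧ α e < 1)
    (δ : ℝ) (hδ : 1 ≤ δ)
    (μ : V → ℝ)
    (hμ : ∀ x, μ x = (∑ e ∈ Finset.univ.filter (fun e => tgt e = x), ν e * α e)
                   + ∑ e ∈ Finset.univ.filter (fun e => src e = x), ν e * (1 - α e))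
    (Per : Finset V → ℝ)
    (hPer : ∀ A, Per A = ∑ e,
      if (src e ∈ A ∧ tgt e ∉ A) ∨ (src e ∉ A ∧ tgt e ∈ A) then ν e / d e else 0)
    (q : Finset V → ℝ)
    (hq : ∀ A, q A = Per A / (min (∑ x ∈ A, μ x) (∑ x ∈ Aᶜ, μ x)) ^ ((δ - 1) / δ))
    (S : Finset V) (hS : (∑ x ∈ S, μ x) ≤ ∑ x ∈ Sᶜ, μ x)
    (n : ℕ) (hn : 0 < n) (Sj : Fin n → Finset V)
    (hcomp : ∀ j, IsConnComponent src tgt S (Sj j))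
    (hcover : ∀ x ∈ S, ∃ j, x ∈ Sj j) :
    Finset.inf' Finset.univ ⟨⟨0, hn⟩, Finset.mem_univ _⟩ (fun j => q (Sj j)) ≤ q S :=
  isoperimetric_ratio_ge_min_components_general src tgt ν hν0 d hd α hα δ hδ μ hμ Per hPer q hq S hS
    n hn Sj hcomp hcover
end

section
/- Fix integers k, m ≥ 2. Let D_{k,m} be the m-branching diamond graph of depth k: its vertex set is (V(P_k) × {1,…,m})/∼ where P_k is the path {0, 1/k, …, 1}, and (u,i) ∼ (v,j) iff (u,i)=(v,j), or u=v=0, or u=v=1; its edges are ([(e⁻,i)],[(e⁺,i)]) for e an edge of P_k and 1 ≤ i ≤ m. Equip E(D_{k,m}) with the uniform probability measure ν(e) = 1/(km) and edge lengths d(e) = 1/k, and let μ be the vertex measure μ(x) = ∑_{e⁺=x} ν(e)/2 + ∑_{e⁻=x} ν(e)/2. Then for every subset S ⊆ V(D_{k,m}), min{μ(S), μ(Sᶜ)}^{(δ−1)/δ} ≤ (m/2) · Per(S) where δ = 1 + log m / log k and Per(S) = ∑_{e ∈ ∂S} ν(e)/d(e). -/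
/-- Vertices of the `m`-branching diamond graph of depth `k`: the source `Sum.inl false`,
the sink `Sum.inl true`, and interior vertices `(position, branch)` with position in
`{1, …, k−1}` (encoded by `Fin (k−1)`) and branch in `{1, …, m}` (encoded by `Fin m`). -/
abbrev DiamondVert (k m : ℕ) := Bool ⊕ (Fin (k - 1) × Fin m)

/-- Tail of the edge at position `e.1 ∈ {0, …, k−1}` on branch `e.2` of `D_{k,m}`. -/
def diamondSrc (k m : ℕ) (e : Fin k × Fin m) : DiamondVert k m :=
  if h : e.1.val = 0 then Sum.inl false
  else Sum.inr (⟨e.1.val - 1, by have := e.1.isLt; omega⟩, e.2)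

/-- Head of the edge at position `e.1 ∈ {0, …, k−1}` on branch `e.2` of `D_{k,m}`. -/
def diamondTgt (k m : ℕ) (e : Fin k × Fin m) : DiamondVert k m :=
  if h : e.1.val = k - 1 then Sum.inl true
  else Sum.inr (⟨e.1.val, by have := e.1.isLt; omega⟩, e.2)

/-- The degree-probability vertex measure of `D_{k,m}` induced by the uniform edge measure
`ν(e) = 1/(km)`: `μ(x) = ∑_{e⁺=x} ν(e)/2 + ∑_{e⁻=x} ν(e)/2`. -/
noncomputable def diamondμ (k m : ℕ) (x : DiamondVert k m) : ℝ :=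
  (∑ _e ∈ Finset.univ.filter (fun e => diamondTgt k m e = x), (1 / (k * m : ℝ)) / 2)
  + ∑ _e ∈ Finset.univ.filter (fun e => diamondSrc k m e = x), (1 / (k * m : ℝ)) / 2

/-! The exponent `(δ - 1)/δ = log m / (log k + log m)` is positive, so the left-hand side vanishes
when `S` or `Sᶜ` is empty and is at most `1` otherwise, `μ` being a probability measure. Every edge
of `∂S` contributes `ν(e)/d(e) = 1/m` to `Per(S)`, so the right-hand side is `|∂S|/2`, and a proper
nonempty `S` cuts at least two edges of `D_{k,m}`. -/

theorem Nat.exists_not_iff_succ_of_not_iff {P : ℕ → Prop} {a b : ℕ} (hab : a ≤ b)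
    (h : ¬(P a ↔ P b)) : ∃ p, a ≤ p ∧ p < b ∧ ¬(P p ↔ P (p + 1)) := by
  induction b, hab using Nat.le_induction with
  | base => exact absurd Iff.rfl h
  | succ b hab ih =>
    by_cases hb : P b ↔ P (b + 1)
    · obtain ⟨p, hap, hpb, hp⟩ := ih (by rwa [hb])
      exact ⟨p, hap, hpb.trans (Nat.lt_succ_self b), hp⟩
    · exact ⟨b, hab, Nat.lt_succ_self b, hb⟩

namespace Diamond

open Finset

variable {k m : ℕ}

/-- Position `p ∈ {0, …, k}` on branch `j`; positions `0` and `k` are the source and the sink,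
shared by all branches. -/
def vertAt (k m : ℕ) (j : Fin m) (p : ℕ) : DiamondVert k m :=
  if hp : p = 0 then Sum.inl false
  else if h : p < k then Sum.inr (⟨p - 1, by omega⟩, j)
  else Sum.inl true

lemma diamondSrc_eq_vertAt (e : Fin k × Fin m) : diamondSrc k m e = vertAt k m e.2 e.1 := by
  rcases e with ⟨⟨p, hp⟩, j⟩
  by_cases h0 : p = 0 <;> simp [diamondSrc, vertAt, h0, hp]

lemma diamondTgt_eq_vertAt (e : Fin k × Fin m) :
    diamondTgt k m e = vertAt k m e.2 (e.1 + 1) := by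
  rcases e with ⟨⟨p, hp⟩, j⟩
  by_cases h : p = k - 1
  · simp [diamondTgt, vertAt, h, show ¬(k - 1 + 1 < k) by omega]
  · simp [diamondTgt, vertAt, h, show p + 1 < k by omega]

lemma vertAt_zero (j : Fin m) : vertAt k m j 0 = Sum.inl false := rfl

lemma vertAt_self (hk : k ≠ 0) (j : Fin m) : vertAt k m j k = Sum.inl true := by
  simp [vertAt, hk]

lemma vertAt_succ (q : Fin (k - 1)) (j : Fin m) : vertAt k m j (q + 1) = Sum.inr (q, j) := by
  simp [vertAt, show (q : ℕ) + 1 < k by omega]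

def boundary (S : Finset (DiamondVert k m)) : Finset (Fin k × Fin m) :=
  univ.filter fun e => ¬(diamondSrc k m e ∈ S ↔ diamondTgt k m e ∈ S)

lemma exists_mem_boundary_of_not_iff (S : Finset (DiamondVert k m)) (j : Fin m) {a b : ℕ}
    (hab : a ≤ b) (hbk : b ≤ k) (h : ¬(vertAt k m j a ∈ S ↔ vertAt k m j b ∈ S)) :
    ∃ (p : ℕ) (hp : p < k), a ≤ p ∧ p < b ∧ (⟨p, hp⟩, j) ∈ boundary S := by
  obtain ⟨p, hap, hpb, hp⟩ :=
    Nat.exists_not_iff_succ_of_not_iff (P := fun p => vertAt k m j p ∈ S) hab h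
  refine ⟨p, by omega, hap, hpb, ?_⟩
  simpa [boundary, diamondSrc_eq_vertAt, diamondTgt_eq_vertAt] using hp

/-- Every branch is a path from the source to the sink, so a set separating them cuts all
`m ≥ 2` branches; otherwise some interior vertex is separated from both, and its branch is cut
on either side of it. -/
theorem one_lt_card_boundary (hk : 2 ≤ k) (hm : 2 ≤ m) {S : Finset (DiamondVert k m)}
    (hS : S.Nonempty) (hSc : Sᶜ.Nonempty) : 1 < #(boundary S) := by
  rw [one_lt_card]
  have hk0 : k ≠ 0 := by omega
  by_cases hends : (Sum.inl false : DiamondVert k m) ∈ S ↔ Sum.inl true ∈ S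
  · obtain ⟨x, hx⟩ : ∃ x, ¬(x ∈ S ↔ (Sum.inl false : DiamondVert k m) ∈ S) := by
      by_cases hsrc : (Sum.inl false : DiamondVert k m) ∈ S
      · obtain ⟨x, hx⟩ := hSc
        exact ⟨x, by simp_all⟩
      · obtain ⟨x, hx⟩ := hS
        exact ⟨x, by simp_all⟩
    rcases x with (_ | _) | ⟨q, j⟩
    · exact absurd Iff.rfl hx
    · exact absurd hends.symm hx
    have hsrc : ¬(vertAt k m j 0 ∈ S ↔ vertAt k m j (q + 1) ∈ S) := by
      rw [vertAt_zero, vertAt_succ]; tauto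
    have hsnk : ¬(vertAt k m j (q + 1) ∈ S ↔ vertAt k m j k ∈ S) := by
      rw [vertAt_self hk0, vertAt_succ]; tauto
    obtain ⟨p₁, _, -, hp₁q, he₁⟩ :=
      exists_mem_boundary_of_not_iff S j (Nat.zero_le _) (by omega) hsrc
    obtain ⟨p₂, _, hqp₂, -, he₂⟩ := exists_mem_boundary_of_not_iff S j (by omega) le_rfl hsnk
    refine ⟨_, he₁, _, he₂, fun h => ?_⟩
    simp only [Prod.mk.injEq, Fin.mk.injEq, and_true] at h
    omega
  · have cross (j : Fin m) : ¬(vertAt k m j 0 ∈ S ↔ vertAt k m j k ∈ S) := by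
      rwa [vertAt_zero, vertAt_self hk0]
    obtain ⟨_, _, -, -, he₁⟩ :=
      exists_mem_boundary_of_not_iff S ⟨0, by omega⟩ (Nat.zero_le k) le_rfl (cross _)
    obtain ⟨_, _, -, -, he₂⟩ :=
      exists_mem_boundary_of_not_iff S ⟨1, by omega⟩ (Nat.zero_le k) le_rfl (cross _)
    exact ⟨_, he₁, _, he₂, by simp⟩

lemma diamondμ_nonneg (x : DiamondVert k m) : 0 ≤ diamondμ k m x := by
  unfold diamondμ
  positivity

lemma sum_diamondμ_univ (hk : k ≠ 0) (hm : m ≠ 0) : ∑ x, diamondμ k m x = 1 := by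
  simp only [diamondμ, sum_add_distrib]
  rw [sum_fiberwise, sum_fiberwise, sum_const, card_univ, Fintype.card_prod, Fintype.card_fin,
    Fintype.card_fin, nsmul_eq_mul]
  field_simp
  push_cast
  ring

lemma sum_diamondμ_le_one (hk : k ≠ 0) (hm : m ≠ 0) (S : Finset (DiamondVert k m)) :
    ∑ x ∈ S, diamondμ k m x ≤ 1 :=
  (sum_le_sum_of_subset_of_nonneg (subset_univ S) fun x _ _ => diamondμ_nonneg x).trans_eq
    (sum_diamondμ_univ hk hm)

lemma perimeter_eq_card_boundary_div (hk : k ≠ 0) (S : Finset (DiamondVert k m)) :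
    ∑ e : Fin k × Fin m,
        (if (diamondSrc k m e ∈ S ∧ diamondTgt k m e ∉ S) ∨
            (diamondSrc k m e ∉ S ∧ diamondTgt k m e ∈ S)
          then (1 / (k * m : ℝ)) / (1 / (k : ℝ)) else 0) = #(boundary S) / m := by
  have hcond (e : Fin k × Fin m) : (diamondSrc k m e ∈ S ∧ diamondTgt k m e ∉ S) ∨
      (diamondSrc k m e ∉ S ∧ diamondTgt k m e ∈ S) ↔ e ∈ boundary S := by
    simp only [boundary, mem_filter, mem_univ, true_and]
    tauto
  simp_rw [hcond]
  rw [sum_ite_mem, univ_inter, sum_const, nsmul_eq_mul]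
  field_simp

lemma isoperimetric_exponent_pos {a b : ℝ} (ha : 1 < a) (hb : 1 < b) :
    0 < ((1 + Real.log b / Real.log a) - 1) / (1 + Real.log b / Real.log a) := by
  have := div_pos (Real.log_pos hb) (Real.log_pos ha)
  rw [add_sub_cancel_left]
  positivity

end Diamond

open Finset Diamond in
/-- Isoperimetric inequality for the generalized diamond graph `D_{k,m}`:
`min{μ(S), μ(Sᶜ)}^{(δ−1)/δ} ≤ (m/2)·Per(S)` with `δ = 1 + log m / log k`, uniform edge
measure `ν(e) = 1/(km)` and edge lengths `d(e) = 1/k`. -/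
theorem diamond_isoperimetric (k m : ℕ) (hk : 2 ≤ k) (hm : 2 ≤ m)
    (S : Finset (DiamondVert k m)) :
    (min (∑ x ∈ S, diamondμ k m x) (∑ x ∈ Sᶜ, diamondμ k m x)) ^
        (((1 + Real.log m / Real.log k) - 1) / (1 + Real.log m / Real.log k)) ≤
      (m / 2 : ℝ) * ∑ e : Fin k × Fin m,
        (if (diamondSrc k m e ∈ S ∧ diamondTgt k m e ∉ S) ∨
            (diamondSrc k m e ∉ S ∧ diamondTgt k m e ∈ S)
          then (1 / (k * m : ℝ)) / (1 / (k : ℝ)) else 0) := by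
  have hk0 : k ≠ 0 := by omega
  have hm0 : m ≠ 0 := by omega
  have hε := isoperimetric_exponent_pos (a := k) (b := m) (by exact_mod_cast hk)
    (by exact_mod_cast hm)
  rw [perimeter_eq_card_boundary_div hk0]
  rcases S.eq_empty_or_nonempty with rfl | hS
  · rw [sum_empty, min_eq_left (sum_nonneg fun x _ => diamondμ_nonneg x),
      Real.zero_rpow hε.ne']
    positivity
  rcases Sᶜ.eq_empty_or_nonempty with hSc | hSc
  · rw [hSc, sum_empty, min_eq_right (sum_nonneg fun x _ => diamondμ_nonneg x),
      Real.zero_rpow hε.ne']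
    positivity
  have hcut : (2 : ℝ) ≤ #(boundary S) := by exact_mod_cast one_lt_card_boundary hk hm hS hSc
  calc _ ≤ (1 : ℝ) :=
        Real.rpow_le_one (le_min (sum_nonneg fun x _ => diamondμ_nonneg x)
          (sum_nonneg fun x _ => diamondμ_nonneg x))
          ((min_le_left _ _).trans (sum_diamondμ_le_one hk0 hm0 S)) hε.le
    _ ≤ (m / 2 : ℝ) * (#(boundary S) / m) := by
      field_simp
      linarith
end

section
/- Fix integers k, m ≥ 2 and let D_{k,m} be the m-branching diamond graph of depth k with source s and sink t, uniform edge probability measure ν(e) = 1/(km), and edge lengths d(e) = 1/k. Define φ : V(D_{k,m}) → ℝ by φ([(u,i)]) = 1 if i is odd, i < m, and u ∉ {0,1}; φ([(u,i)]) = −1 if i is even and u ∉ {0,1}; and φ = 0 otherwise. Then: (1) φ(s) = φ(t) = 0; (2) φ(e⁻)·φ(e⁺) ≥ 0 for every edge e (edge-sign property); (3) ‖φ‖_∞ = 1; (4) ‖φ‖_{L¹(μ)} = 2(k−1)⌊m/2⌋/(km) ≥ 1/3, where μ is the vertex measure μ(x) = ∑_{e⁺=x} ν(e)/2 + ∑_{e⁻=x}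 ν(e)/2; and (5) for each edge ε of the path P_k, ∑_{e : π(e) = ε} φ(e⁻) ν(e) = 0 and ∑_{e : π(e) = ε} φ(e⁺) ν(e) = 0, where π : V(D_{k,m}) → V(P_k) is the collapsing map π([(u,i)]) = u. -/
/-- The base function `φ` of `D_{k,m}`: with branches `i = j + 1 ∈ {1, …, m}`, it is `1` on
interior vertices of odd branches `i < m`, `−1` on interior vertices of even branches,
and `0` otherwise (in particular on the source and the sink). -/
noncomputable def diamondφ (k m : ℕ) : DiamondVert k m → ℝ
  | Sum.inl _ => 0
  | Sum.inr (_, j) =>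
      if j.val % 2 = 0 ∧ j.val + 1 < m then 1 else if j.val % 2 = 1 then -1 else 0

/-!
On an interior vertex `φ` depends only on the branch `j`, where it equals `(-1)^j` except
on the last branch when `m` is odd, where it is `0`. Both endpoints of an edge lie on the
same branch or at `s`, `t`, which gives the edge-sign property, and the `2⌊m/2⌋` nonzero
values cancel in pairs over the branches, which gives the vanishing fibre sums. Every interior
vertex has `μ`-mass `1/(km)`, whence the `L¹` norm.
-/

open Finset

noncomputable def branchSign (m j : ℕ) : ℝ :=
  if j % 2 = 0 ∧ j + 1 < m then 1 else if j % 2 = 1 then -1 else 0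

theorem branchSign_of_lt {m j : ℕ} (hj : j < m) :
    branchSign m j = if j < 2 * (m / 2) then (-1) ^ j else 0 := by
  rcases Nat.mod_two_eq_zero_or_one j with h | h
  · rw [Even.neg_one_pow (Nat.even_iff.mpr h)]
    unfold branchSign
    split_ifs <;> first | rfl | omega
  · rw [Odd.neg_one_pow (Nat.odd_iff.mpr h)]
    unfold branchSign
    split_ifs <;> first | rfl | omega

theorem sum_range_comp_branchSign (m : ℕ) {g : ℝ → ℝ} (hg : g 0 = 0) :
    ∑ j ∈ range m, g (branchSign m j) = ∑ j ∈ range (2 * (m / 2)), g ((-1) ^ j) := by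
  have hsub : range (2 * (m / 2)) ⊆ range m := range_subset_range.mpr (Nat.mul_div_le m 2)
  rw [← sum_subset hsub]
  · refine sum_congr rfl fun j hj => ?_
    rw [mem_range] at hj
    rw [branchSign_of_lt (by omega), if_pos hj]
  · intro j hj hj'
    rw [mem_range] at hj hj'
    rw [branchSign_of_lt hj, if_neg hj', hg]

theorem sum_branchSign (m : ℕ) : ∑ j : Fin m, branchSign m j = 0 := by
  rw [Fin.sum_univ_eq_sum_range (branchSign m)]
  simpa [neg_one_geom_sum] using sum_range_comp_branchSign m (g := id) rfl

theorem sum_abs_branchSign (m : ℕ) : ∑ j : Fin m, |branchSign m j| = 2 * (m / 2 : ℕ) := by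
  rw [Fin.sum_univ_eq_sum_range (|branchSign m ·|), sum_range_comp_branchSign m abs_zero]
  simp

theorem abs_branchSign_le_one (m j : ℕ) : |branchSign m j| ≤ 1 := by
  unfold branchSign
  split_ifs <;> norm_num

section Diamond

variable {k m : ℕ}

@[simp]
theorem diamondφ_inl (b : Bool) : diamondφ k m (Sum.inl b) = 0 := rfl

@[simp]
theorem diamondφ_inr (p : Fin (k - 1)) (j : Fin m) :
    diamondφ k m (Sum.inr (p, j)) = branchSign m j := rfl

theorem diamondφ_diamondSrc (e : Fin k × Fin m) :
    diamondφ k m (diamondSrc k m e) = if e.1.val = 0 then 0 else branchSign m e.2 := by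
  unfold diamondSrc
  split_ifs <;> rfl

theorem diamondφ_diamondTgt (e : Fin k × Fin m) :
    diamondφ k m (diamondTgt k m e) = if e.1.val = k - 1 then 0 else branchSign m e.2 := by
  unfold diamondTgt
  split_ifs <;> rfl

theorem diamondφ_diamondSrc_mul_diamondTgt_nonneg (e : Fin k × Fin m) :
    0 ≤ diamondφ k m (diamondSrc k m e) * diamondφ k m (diamondTgt k m e) := by
  rw [diamondφ_diamondSrc, diamondφ_diamondTgt]
  split_ifs
  · rw [zero_mul]
  · rw [zero_mul]
  · rw [mul_zero]
  · exact mul_self_nonneg _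

theorem sum_diamondφ_diamondSrc (i : Fin k) : ∑ j, diamondφ k m (diamondSrc k m (i, j)) = 0 := by
  simp only [diamondφ_diamondSrc]
  split_ifs
  · exact sum_const_zero
  · exact sum_branchSign m

theorem sum_diamondφ_diamondTgt (i : Fin k) : ∑ j, diamondφ k m (diamondTgt k m (i, j)) = 0 := by
  simp only [diamondφ_diamondTgt]
  split_ifs
  · exact sum_const_zero
  · exact sum_branchSign m

theorem abs_diamondφ_le_one (x : DiamondVert k m) : |diamondφ k m x| ≤ 1 := by
  rcases x with b | ⟨p, j⟩
  · simp
  · exact abs_branchSign_le_one m j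

theorem diamondTgt_eq_inr_iff {e : Fin k × Fin m} {p : Fin (k - 1)} {j : Fin m} :
    diamondTgt k m e = Sum.inr (p, j) ↔ e = (p.castLE (Nat.sub_le k 1), j) := by
  unfold diamondTgt
  split_ifs with h
  · simp only [false_iff, Prod.ext_iff, Fin.ext_iff, Fin.val_castLE]
    have := p.isLt
    omega
  · simp [Prod.ext_iff, Fin.ext_iff]

theorem diamondSrc_eq_inr_iff {e : Fin k × Fin m} {p : Fin (k - 1)} {j : Fin m} :
    diamondSrc k m e = Sum.inr (p, j) ↔ e = (⟨p + 1, Nat.add_lt_of_lt_sub p.isLt⟩, j) := by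
  unfold diamondSrc
  split_ifs with h
  · simp only [false_iff, Prod.ext_iff, Fin.ext_iff]
    omega
  · simp only [Sum.inr.injEq, Prod.ext_iff, Fin.ext_iff, and_congr_left_iff]
    omega

theorem diamondμ_inr (p : Fin (k - 1)) (j : Fin m) :
    diamondμ k m (Sum.inr (p, j)) = 1 / (k * m) := by
  simp only [diamondμ, diamondTgt_eq_inr_iff, diamondSrc_eq_inr_iff, filter_eq', mem_univ,
    if_true, sum_singleton]
  ring

theorem sum_diamondμ_mul_abs_diamondφ (hk : 1 ≤ k) :
    ∑ x, diamondμ k m x * |diamondφ k m x| = 2 * ((k : ℝ) - 1) * (m / 2 : ℕ) / (k * m) := by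
  rw [Fintype.sum_sum_type, Fintype.sum_prod_type]
  simp only [diamondφ_inl, abs_zero, mul_zero, sum_const_zero, zero_add, diamondμ_inr,
    diamondφ_inr, ← mul_sum, sum_abs_branchSign, sum_const, card_univ, Fintype.card_fin,
    nsmul_eq_mul, Nat.cast_sub hk]
  ring

end Diamond

theorem one_div_three_le_diamond_l1Norm {k m : ℕ} (hk : 2 ≤ k) (hm : 2 ≤ m) :
    (1 : ℝ) / 3 ≤ 2 * ((k : ℝ) - 1) * ((m / 2 : ℕ) : ℝ) / ((k : ℝ) * m) := by
  have hk' : (k : ℝ) ≤ 2 * ((k : ℝ) - 1) := by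
    have : (2 : ℝ) ≤ k := by exact_mod_cast hk
    linarith
  have hm' : (m : ℝ) ≤ 3 * ((m / 2 : ℕ) : ℝ) := by exact_mod_cast (by omega : m ≤ 3 * (m / 2))
  rw [le_div_iff₀ (by positivity)]
  nlinarith [(by positivity : (0 : ℝ) ≤ k), (by positivity : (0 : ℝ) ≤ m)]

/-- The base function of the diamond graph `D_{k,m}`: it vanishes at the source and the sink,
has the edge-sign property, has sup norm `1`, has `L¹(μ)`-norm `2(k−1)⌊m/2⌋/(km) ≥ 1/3`, and
its induced edge functions `φ₋, φ₊` average to `0` over the edges lying above each fixed edge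
of the path `P_k` (kernel of the conditional expectation onto the collapsing map). -/
theorem diamond_base_function (k m : ℕ) (hk : 2 ≤ k) (hm : 2 ≤ m) :
    (diamondφ k m (Sum.inl false) = 0 ∧ diamondφ k m (Sum.inl true) = 0) ∧
    (∀ e : Fin k × Fin m, 0 ≤ diamondφ k m (diamondSrc k m e) * diamondφ k m (diamondTgt k m e)) ∧
    ((∀ x, |diamondφ k m x| ≤ 1) ∧ ∃ x, |diamondφ k m x| = 1) ∧
    ((∑ x, diamondμ k m x * |diamondφ k m x|)
        = 2 * ((k : ℝ) - 1) * ((m / 2 : ℕ) : ℝ) / ((k : ℝ) * m) ∧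
      (1 : ℝ) / 3 ≤ 2 * ((k : ℝ) - 1) * ((m / 2 : ℕ) : ℝ) / ((k : ℝ) * m)) ∧
    (∀ i : Fin k,
      (∑ j : Fin m, diamondφ k m (diamondSrc k m (i, j)) * (1 / ((k : ℝ) * m)) = 0) ∧
      (∑ j : Fin m, diamondφ k m (diamondTgt k m (i, j)) * (1 / ((k : ℝ) * m)) = 0)) := by
  refine ⟨⟨rfl, rfl⟩, diamondφ_diamondSrc_mul_diamondTgt_nonneg, ⟨abs_diamondφ_le_one, ?_⟩,
    ⟨sum_diamondμ_mul_abs_diamondφ (by omega), one_div_three_le_diamond_l1Norm hk hm⟩,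
    fun i => ⟨?_, ?_⟩⟩
  · refine ⟨Sum.inr (⟨0, by omega⟩, ⟨0, by omega⟩), ?_⟩
    simp [branchSign, show 1 < m by omega]
  · rw [← sum_mul, sum_diamondφ_diamondSrc, zero_mul]
  · rw [← sum_mul, sum_diamondφ_diamondTgt, zero_mul]
end
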